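/- arXiv:2512.10364 — 3 statements merged into one kernel-verified Lean document; each statement's English description precedes it below -/
import Mathlib

section
/- Let X be an abstract simplicial complex on a finite vertex set V of size n with vertex weight function ω, let 0 ≤ k ≤ dim(X), and let X_k^* = {τ ⊆ V : τ ⊆ V∖σ for some σ ∈ X(k)}, whose (n−k−2)-simplices are exactly the complements V∖σ of σ ∈ X(k), so that f_{n−k−2}(X_k^*) = f_k(X). Then for every 1 ≤ i ≤ f_k(X), λ_i^↓(L_k^{ω,down}(X)) + λ_{f_k(X)+1−i}^↓(L_{n−k−2}^{ω,down}(X_k^*)) = Σ_{v∈V} ω(v). -/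
open Finset

/-- An abstract simplicial complex on the vertex type `V`: a collection of finite subsets of `V`
closed under taking subsets and containing the empty set. -/
structure AbstractSC (V : Type*) where
  faces : Finset (Finset V)
  empty_mem : ∅ ∈ faces
  down_closed : ∀ ⦃σ τ : Finset V⦄, σ ∈ faces → τ ⊆ σ → τ ∈ faces

variable {V : Type*} [Fintype V] [LinearOrder V]

namespace AbstractSC

/-- The link of a face `σ`: the vertices `v ∉ σ` with `σ ∪ {v}` a face. -/
def link (X : AbstractSC V) (σ : Finset V) : Finset V :=
  univ.filter fun v => v ∉ σ ∧ insert v σ ∈ X.faces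

/-- The dimension of the complex (as an integer, so that `dim {∅} = -1`). -/
def dimension (X : AbstractSC V) : ℤ :=
  ((X.faces.sup Finset.card : ℕ) : ℤ) - 1

/-- The faces of cardinality `s`, i.e. the `(s-1)`-simplices. -/
def facesOfCard (X : AbstractSC V) (s : ℕ) : Finset (Finset V) :=
  X.faces.filter fun σ => σ.card = s

/-- The type of faces of cardinality `s` (the `(s-1)`-simplices). -/
abbrev Face (X : AbstractSC V) (s : ℕ) := {σ : Finset V // σ ∈ X.faces ∧ σ.card = s}

/-- `h(X)`: the maximal dimension of a missing face (a non-face all of whose proper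
subsets are faces), as an integer. -/
def hdim (X : AbstractSC V) : ℤ :=
  (((univ.powerset.filter fun σ : Finset V =>
      σ ∉ X.faces ∧ ∀ τ : Finset V, τ ⊂ σ → τ ∈ X.faces).sup Finset.card : ℕ) : ℤ) - 1

end AbstractSC

/-- The sign `(-1)^{ε(σ,τ)}`, where `ε(σ,τ)` is the number of elements of `σ ∩ τ` lying
strictly between the unique element of `σ \ τ` and the unique element of `τ \ σ`. -/
def epsSign (σ τ : Finset V) : ℝ :=
  if h : (σ \ τ).Nonempty ∧ (τ \ σ).Nonempty then
    (-1 : ℝ) ^ ((σ ∩ τ).filter fun w =>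
        min ((σ \ τ).min' h.1) ((τ \ σ).min' h.2) < w ∧
          w < max ((σ \ τ).min' h.1) ((τ \ σ).min' h.2)).card
  else 1

/-- The vertex-weighted `(s-1)`-dimensional Laplacian `L_{s-1}^ω(X)`, as a matrix indexed by
the faces of cardinality `s`. -/
noncomputable def lapFull (X : AbstractSC V) (ω : V → ℝ) (s : ℕ) :
    Matrix (X.Face s) (X.Face s) ℝ := fun σ τ =>
  if σ = τ then (∑ v ∈ X.link σ.1, ω v) + ∑ v ∈ σ.1, ω v
  else if (σ.1 ∩ τ.1).card + 1 = s ∧ σ.1 ∪ τ.1 ∉ X.faces then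
    epsSign σ.1 τ.1 * ∏ v ∈ τ.1 \ σ.1, ω v
  else 0

/-- The vertex-weighted `k`-dimensional Laplacian, for an integer `k ≥ -1`. -/
noncomputable def lapZ (X : AbstractSC V) (ω : V → ℝ) (k : ℤ) :
    Matrix (X.Face (k + 1).toNat) (X.Face (k + 1).toNat) ℝ :=
  lapFull X ω (k + 1).toNat

/-- The vertex-weighted `(s-1)`-dimensional down-Laplacian `L_{s-1}^{ω,down}(X)`. -/
noncomputable def lapDown (X : AbstractSC V) (ω : V → ℝ) (s : ℕ) :
    Matrix (X.Face s) (X.Face s) ℝ := fun σ τ =>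
  if σ = τ then ∑ v ∈ σ.1, ω v
  else if (σ.1 ∩ τ.1).card + 1 = s then epsSign σ.1 τ.1 * ∏ v ∈ τ.1 \ σ.1, ω v
  else 0

/-- The vertex-weighted `(s-1)`-dimensional up-Laplacian of a collection `F` of faces,
as a matrix indexed by all `s`-element subsets of `V`. -/
noncomputable def lapUpF (F : Finset (Finset V)) (ω : V → ℝ) (s : ℕ) :
    Matrix {σ : Finset V // σ.card = s} {σ : Finset V // σ.card = s} ℝ := fun σ τ =>
  if σ = τ then
    (if σ.1 ∈ F then ∑ u ∈ univ.filter (fun v => v ∉ σ.1 ∧ insert v σ.1 ∈ F), ω u else 0)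
  else if (σ.1 ∩ τ.1).card + 1 = s ∧ σ.1 ∪ τ.1 ∈ F then
    -(epsSign σ.1 τ.1 * ∏ v ∈ τ.1 \ σ.1, ω v)
  else 0

/-- The faces of the complex `X_{s-1}^c`, generated by the `s`-element subsets of `V`
that are not faces of `X`. -/
def complFaces (X : AbstractSC V) (s : ℕ) : Finset (Finset V) :=
  univ.powerset.filter fun τ => ∃ σ : Finset V, σ.card = s ∧ σ ∉ X.faces ∧ τ ⊆ σ

/-- The faces of the `(s-1)`-skeleton of the complete simplicial complex on `V`:
all subsets of cardinality at most `s`. -/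
def skeletonFaces (V : Type*) [Fintype V] [DecidableEq V] (s : ℕ) : Finset (Finset V) :=
  univ.powerset.filter fun σ : Finset V => σ.card ≤ s

/-- The vertex-weighted Laplacian `L^ω(G_X)` of the underlying graph of `X`. -/
noncomputable def graphLap (X : AbstractSC V) (ω : V → ℝ) : Matrix V V ℝ := fun u v =>
  if u = v then ∑ w ∈ univ.filter (fun w => w ≠ u ∧ ({u, w} : Finset V) ∈ X.faces), ω w
  else if ({u, v} : Finset V) ∈ X.faces then -ω v
  else 0

/-- The matrix `J^ω`, with `(u,v)` entry `ω v`. -/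
noncomputable def Jmat (ω : V → ℝ) : Matrix V V ℝ := fun _ v => ω v

/-- `N_σ(u)`: the codimension-one faces `η` of `σ` with `η ∪ {u} ∈ X`. -/
def Nset (X : AbstractSC V) (σ : Finset V) (u : V) : Finset (Finset V) :=
  (σ.powersetCard (σ.card - 1)).filter fun η => insert u η ∈ X.faces

/-- `σ[j]`: the vertices `u` lying in the link of every vertex of `σ` but not in the link of
`σ`, with `|N_σ(u)| = j`. -/
def bracket (X : AbstractSC V) (σ : Finset V) (j : ℕ) : Finset V :=
  univ.filter fun u =>
    (∀ v ∈ σ, u ≠ v ∧ ({v, u} : Finset V) ∈ X.faces) ∧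
      insert u σ ∉ X.faces ∧ (Nset X σ u).card = j

/-- The multiset of eigenvalues (with multiplicity) of a real square matrix:
the roots of its characteristic polynomial. -/
noncomputable def spec {m : Type*} [Fintype m] [DecidableEq m] (M : Matrix m m ℝ) :
    Multiset ℝ :=
  M.charpoly.roots

/-- The `i`-th smallest eigenvalue (1-indexed, with multiplicity). -/
noncomputable def eigAsc {m : Type*} [Fintype m] [DecidableEq m] (M : Matrix m m ℝ)
    (i : ℕ) : ℝ :=
  ((spec M).sort (· ≤ ·)).getD (i - 1) 0

/-- The `i`-th largest eigenvalue (1-indexed, with multiplicity). -/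
noncomputable def eigDesc {m : Type*} [Fintype m] [DecidableEq m] (M : Matrix m m ℝ)
    (i : ℕ) : ℝ :=
  ((spec M).sort (· ≤ ·)).getD ((spec M).card - i) 0

/-- `S^↑_{c,i}(M)`: the `i`-th smallest element (1-indexed) of the multiset of all sums of `c`
of the eigenvalues of `M` (over `c`-element subsets of the index set of the eigenvalues,
listed in increasing order). -/
noncomputable def sumsAsc {m : Type*} [Fintype m] [DecidableEq m] (M : Matrix m m ℝ)
    (c i : ℕ) : ℝ :=
  ((((Finset.range (spec M).card).powersetCard c).val.map
      fun J => ∑ j ∈ J, ((spec M).sort (· ≤ ·)).getD j 0).sort (· ≤ ·)).getD (i - 1) 0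

/-- Minimum of a real-valued function over a finite set (junk value `0` on `∅`). -/
noncomputable def minOver {α : Type*} (s : Finset α) (f : α → ℝ) : ℝ :=
  ((s.image f).min).untopD 0

/-- Maximum of a real-valued function over a finite set (junk value `0` on `∅`). -/
noncomputable def maxOver {α : Type*} (s : Finset α) (f : α → ℝ) : ℝ :=
  ((s.image f).max).unbotD 0

/-- The multiset of all sums `λ_0 + ⋯ + λ_{m-1}` over choices of one element `λ_j` from each
multiset `s j`, counted with multiplicity. -/
noncomputable def multisetSumChoices : (m : ℕ) → (Fin m → Multiset ℝ) → Multiset ℝ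
  | 0, _ => {0}
  | m + 1, s => (s 0).bind fun a => (multisetSumChoices m fun j => s j.succ).map (a + ·)


section AuxGeneric
open Polynomial Matrix
variable {m : Type*} [Fintype m] [DecidableEq m]



lemma aux_charpoly_units_conj (P : (Matrix m m ℝ)ˣ) (A : Matrix m m ℝ) :
    ((P : Matrix m m ℝ) * A * (↑P⁻¹ : Matrix m m ℝ)).charpoly = A.charpoly := by
  let f : Matrix m m ℝ →+* Matrix m m ℝ[X] := (C : ℝ →+* ℝ[X]).mapMatrix
  let P' : (Matrix m m ℝ[X])ˣ := Units.map f.toMonoidHom P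
  have hmat : charmatrix ((P : Matrix m m ℝ) * A * (↑P⁻¹ : Matrix m m ℝ))
      = (P' : Matrix m m ℝ[X]) * charmatrix A * (↑P'⁻¹ : Matrix m m ℝ[X]) := by
    have hPP : (P' : Matrix m m ℝ[X]) * (↑P'⁻¹ : Matrix m m ℝ[X]) = 1 := P'.mul_inv
    have hc : (P' : Matrix m m ℝ[X]) * Matrix.scalar m (X : ℝ[X]) * (↑P'⁻¹ : Matrix m m ℝ[X])
        = Matrix.scalar m (X : ℝ[X]) := by
      rw [(Matrix.scalar_commute (X : ℝ[X]) (fun r => Commute.all _ _) _).symm.eq, mul_assoc,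
        hPP, mul_one]
    rw [charmatrix, charmatrix, mul_sub, sub_mul, hc]
    congr 1
    simp only [P', f, Units.coe_map, RingHom.toMonoidHom_eq_coe, MonoidHom.coe_coe,
      RingHom.mapMatrix_apply, ← Units.coe_map_inv]
    simp [← Matrix.map_mul]
  rw [Matrix.charpoly, Matrix.charpoly, hmat, Matrix.det_units_conj]

lemma aux_charpoly_conj_diag (d : m → ℝ) (hd : ∀ i, d i ≠ 0) (A B : Matrix m m ℝ)
    (h : ∀ i j, B i j = d i * A i j * (d j)⁻¹) : B.charpoly = A.charpoly := by
  have hdd : diagonal d * diagonal (fun i => (d i)⁻¹) = 1 := by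
    rw [diagonal_mul_diagonal, ← diagonal_one]
    exact congrArg diagonal (funext fun i => mul_inv_cancel₀ (hd i))
  have hdd' : diagonal (fun i => (d i)⁻¹) * diagonal d = 1 := by
    rw [diagonal_mul_diagonal, ← diagonal_one]
    exact congrArg diagonal (funext fun i => inv_mul_cancel₀ (hd i))
  let P : (Matrix m m ℝ)ˣ := ⟨diagonal d, diagonal (fun i => (d i)⁻¹), hdd, hdd'⟩
  have hB : B = (P : Matrix m m ℝ) * A * (↑P⁻¹ : Matrix m m ℝ) := by
    ext i j
    rw [h i j]
    show _ = (diagonal d * A * diagonal (fun i => (d i)⁻¹)) i j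
    rw [Matrix.mul_diagonal, Matrix.diagonal_mul]
  rw [hB, aux_charpoly_units_conj]

lemma aux_roots_comp (p : ℝ[X]) (hp : p ≠ 0) (c : ℝ) :
    (p.comp (C c - X)).roots = p.roots.map (fun x => c - x) := by
  have key : ∀ q : ℝ[X], (q.comp (C c - X)).comp (C c - X) = q := by
    intro q
    rw [Polynomial.comp_assoc]
    simp [sub_comp]
  have hq : p.comp (C c - X) ≠ 0 := by
    intro h
    apply hp
    rw [← key p, h, zero_comp]
  have hmul : ∀ (q : ℝ[X]) (x : ℝ), q ≠ 0 →
      rootMultiplicity (c - x) q ≤ rootMultiplicity x (q.comp (C c - X)) := by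
    intro q x hq0
    have hdvd : (X - Polynomial.C (c - x)) ^ (rootMultiplicity (c - x) q) ∣ q :=
      Polynomial.pow_rootMultiplicity_dvd q (c - x)
    have hq0' : q.comp (C c - X) ≠ 0 := by
      intro h
      apply hq0
      rw [← key q, h, zero_comp]
    rw [Polynomial.le_rootMultiplicity_iff hq0']
    obtain ⟨u, hu⟩ := hdvd
    have h2 : q.comp (C c - X) = ((X - Polynomial.C (c - x)) ^ (rootMultiplicity (c - x) q)).comp (C c - X) * u.comp (C c - X) := by
      rw [← mul_comp, ← hu]
    rw [h2]
    apply Dvd.dvd.mul_right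
    rw [pow_comp, sub_comp, X_comp, C_comp]
    have h3 : Polynomial.C c - X - Polynomial.C (c - x) = -(X - Polynomial.C x) := by
      rw [Polynomial.C_sub]
      ring
    rw [h3, neg_pow]
    exact Dvd.dvd.mul_left dvd_rfl _
  classical
  have hinj : Function.Injective (fun x : ℝ => c - x) := fun a b h => by
    simp only at h; linarith
  ext x
  have hfx : x = (fun y : ℝ => c - y) (c - x) := by simp
  rw [Polynomial.count_roots]
  conv_rhs => rw [hfx]
  rw [Multiset.count_map_eq_count' (fun y : ℝ => c - y) _ hinj (c - x),
    Polynomial.count_roots]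
  have h1 := hmul p x hp
  have h2 := hmul (p.comp (C c - X)) (c - x) hq
  rw [key, sub_sub_cancel] at h2
  omega



lemma aux_charpoly_diagonal (d : m → ℝ) :
    (diagonal d).charpoly = ∏ i, (X - Polynomial.C (d i)) := by
  rw [Matrix.charpoly]
  have h : charmatrix (diagonal d) = diagonal (fun i => X - Polynomial.C (d i)) := by
    ext i j
    by_cases h : i = j
    · subst h; simp [charmatrix_apply, diagonal_apply]
    · simp [charmatrix_apply, diagonal_apply, h]
  rw [h, det_diagonal]

lemma aux_card_roots_hermitian (M : Matrix m m ℝ) (hM : M.IsHermitian) :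
    Multiset.card M.charpoly.roots = Fintype.card m := by
  have hU1 : (hM.eigenvectorUnitary : Matrix m m ℝ) * star (hM.eigenvectorUnitary : Matrix m m ℝ) = 1 :=
    Matrix.mem_unitaryGroup_iff.mp (hM.eigenvectorUnitary).2
  have hU2 : star (hM.eigenvectorUnitary : Matrix m m ℝ) * (hM.eigenvectorUnitary : Matrix m m ℝ) = 1 :=
    Matrix.mem_unitaryGroup_iff'.mp (hM.eigenvectorUnitary).2
  let U : (Matrix m m ℝ)ˣ := ⟨(hM.eigenvectorUnitary : Matrix m m ℝ),
    star (hM.eigenvectorUnitary : Matrix m m ℝ), hU1, hU2⟩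
  have hspec : M = (U : Matrix m m ℝ) * diagonal (RCLike.ofReal ∘ hM.eigenvalues) *
      (↑U⁻¹ : Matrix m m ℝ) := hM.spectral_theorem
  have hcp : M.charpoly = (diagonal (RCLike.ofReal ∘ hM.eigenvalues)).charpoly := by
    conv_lhs => rw [hspec]
    exact aux_charpoly_units_conj U _
  have hofreal : (RCLike.ofReal ∘ hM.eigenvalues : m → ℝ) = hM.eigenvalues := by
    funext i; simp
  rw [hcp, hofreal, aux_charpoly_diagonal]
  have : (∏ i, (X - Polynomial.C (hM.eigenvalues i))) =
      ((Finset.univ.val.map hM.eigenvalues).map (fun a => X - Polynomial.C a)).prod := by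
    rw [Multiset.map_map]
    rfl
  rw [this, Polynomial.roots_multiset_prod_X_sub_C]
  rw [Multiset.card_map]
  rfl



lemma aux_charpoly_smul_one_sub (A : Matrix m m ℝ) (c : ℝ) :
    (c • (1 : Matrix m m ℝ) - A).charpoly
      = (-1 : ℝ[X]) ^ (Fintype.card m) * (A.charpoly.comp (Polynomial.C c - X)) := by
  let φ : ℝ[X] →+* ℝ[X] := Polynomial.eval₂RingHom Polynomial.C (Polynomial.C c - X)
  have hφ : ∀ p : ℝ[X], φ p = p.comp (Polynomial.C c - X) := fun p => rfl
  have hmat : charmatrix (c • (1 : Matrix m m ℝ) - A) = -((charmatrix A).map φ) := by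
    apply Matrix.ext
    intro i j
    have hentry : (-((charmatrix A).map φ)) i j = -((charmatrix A i j).comp (Polynomial.C c - X)) := by
      simp only [Matrix.neg_apply, Matrix.map_apply, hφ]
    rw [hentry]
    by_cases h : i = j
    · subst h
      rw [charmatrix_apply_eq, charmatrix_apply_eq, sub_comp, X_comp, C_comp]
      simp only [Matrix.sub_apply, Matrix.smul_apply, Matrix.one_apply_eq, smul_eq_mul, mul_one,
        Polynomial.C_sub]
      ring
    · rw [charmatrix_apply_ne _ _ _ h, charmatrix_apply_ne _ _ _ h, neg_comp, C_comp]
      simp only [Matrix.sub_apply, Matrix.smul_apply, Matrix.one_apply_ne h, smul_eq_mul, mul_zero,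
        zero_sub, Polynomial.C_neg]
  rw [Matrix.charpoly, hmat, Matrix.det_neg, Matrix.charpoly]
  have hdet := RingHom.map_det φ (charmatrix A)
  rw [RingHom.mapMatrix_apply] at hdet
  rw [← hdet, hφ]

lemma aux_roots_smul_one_sub (A : Matrix m m ℝ) (c : ℝ)
    (hroots : ∀ (p : ℝ[X]), p ≠ 0 →
      (p.comp (Polynomial.C c - X)).roots = p.roots.map (fun x => c - x)) :
    (c • (1 : Matrix m m ℝ) - A).charpoly.roots = A.charpoly.roots.map (fun x => c - x) := by
  rw [aux_charpoly_smul_one_sub]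
  have h1 : ((-1 : ℝ[X]) ^ (Fintype.card m)) = Polynomial.C ((-1:ℝ) ^ (Fintype.card m)) := by
    rw [Polynomial.C_pow]; simp
  have h2 : ((-1:ℝ) ^ (Fintype.card m)) ≠ 0 := by positivity
  rw [h1, Polynomial.roots_C_mul _ h2]
  exact hroots A.charpoly (A.charpoly_monic.ne_zero)
end AuxGeneric

section AuxSort
open Polynomial Matrix
variable {m : Type*} [Fintype m] [DecidableEq m]
lemma aux_sort_map_reverse (s : Multiset ℝ) (c : ℝ) :
    (s.map (fun x => c - x)).sort (· ≤ ·) = ((s.sort (· ≤ ·)).map (fun x => c - x)).reverse := by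
  refine (fun h1 h2 h3 => List.Perm.eq_of_pairwise' (r := (· ≤ ·)) h2 h3 h1) ?_ ?_ ?_
  · rw [← Multiset.coe_eq_coe]
    rw [Multiset.sort_eq, Multiset.coe_reverse, ← Multiset.map_coe, Multiset.sort_eq]
  · exact Multiset.pairwise_sort _ _
  · rw [List.pairwise_reverse]
    have hs := Multiset.pairwise_sort s (· ≤ ·)
    refine List.Pairwise.map _ ?_ hs
    intro a b hab
    show c - b ≤ c - a
    linarith

lemma aux_eig_sum (A B : Matrix m m ℝ) (c : ℝ)
    (hcard : Multiset.card (spec A) = Fintype.card m)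
    (hspec : spec B = (spec A).map (fun x => c - x))
    (i F : ℕ) (hF : F = Fintype.card m) (hi1 : 1 ≤ i) (hi2 : i ≤ F) :
    eigDesc A i + eigDesc B (F + 1 - i) = c := by
  set l := (spec A).sort (· ≤ ·) with hl
  have hlen : l.length = F := by rw [hl, Multiset.length_sort, hcard, hF]
  have hcardB : (spec B).card = F := by rw [hspec, Multiset.card_map, hcard, hF]
  have hsortB : (spec B).sort (· ≤ ·) = (l.map (fun x => c - x)).reverse := by
    rw [hspec, aux_sort_map_reverse]
  have hFi : F - (F + 1 - i) = i - 1 := by omega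
  have h1 : i - 1 < (l.map (fun x => c - x)).reverse.length := by
    rw [List.length_reverse, List.length_map, hlen]; omega
  have h2 : F - i < l.length := by omega
  have e1 : eigDesc A i = l.getD (F - i) 0 := by
    rw [eigDesc, ← hl, hcard, hF]
  have e2 : eigDesc B (F + 1 - i) = (l.map (fun x => c - x)).reverse.getD (i - 1) 0 := by
    rw [eigDesc, hsortB, hcardB, hFi]
  rw [e1, e2, List.getD_eq_getElem _ _ h1, List.getD_eq_getElem _ _ h2]
  rw [List.getElem_reverse]
  have h3 : (l.map fun x => c - x).length - 1 - (i - 1) = F - i := by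
    rw [List.length_map, hlen]; omega
  simp only [h3]
  rw [List.getElem_map]
  ring

end AuxSort

section AuxSign
set_option linter.unusedSectionVars false
open Polynomial Matrix
variable {V : Type*} [Fintype V] [LinearOrder V]
lemma aux_epsSign_eq (σ τ : Finset V) (a b : V) (ha : σ \ τ = {a}) (hb : τ \ σ = {b}) :
    epsSign σ τ = (-1:ℝ) ^ ((σ ∩ τ).filter fun w => min a b < w ∧ w < max a b).card := by
  have h1 : (σ \ τ).Nonempty := by rw [ha]; exact singleton_nonempty a
  have h2 : (τ \ σ).Nonempty := by rw [hb]; exact singleton_nonempty b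
  rw [epsSign, dif_pos ⟨h1, h2⟩]
  have e1 : (σ \ τ).min' h1 = a := by
    refine le_antisymm (Finset.min'_le _ _ (by rw [ha]; exact mem_singleton_self a)) ?_
    refine Finset.le_min' _ _ _ (fun y hy => ?_)
    rw [ha, mem_singleton] at hy
    exact hy.ge
  have e2 : (τ \ σ).min' h2 = b := by
    refine le_antisymm (Finset.min'_le _ _ (by rw [hb]; exact mem_singleton_self b)) ?_
    refine Finset.le_min' _ _ _ (fun y hy => ?_)
    rw [hb, mem_singleton] at hy
    exact hy.ge
  rw [e1, e2]

lemma aux_epsSign_sq (σ τ : Finset V) (a b : V) (ha : σ \ τ = {a}) (hb : τ \ σ = {b}) :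
    epsSign σ τ * epsSign σ τ = 1 := by
  rw [aux_epsSign_eq σ τ a b ha hb, ← pow_add, ← two_mul, pow_mul]
  norm_num

lemma aux_between_card (σ τ : Finset V) (a b : V)
    (ha : σ \ τ = {a}) (hb : τ \ σ = {b}) :
    ((σ ∩ τ).filter fun w => min a b < w ∧ w < max a b).card
      + (((univ \ σ) ∩ (univ \ τ)).filter fun w => min a b < w ∧ w < max a b).card
      = (univ.filter fun w => min a b < w ∧ w < max a b).card := by
  rw [← Finset.card_union_of_disjoint]
  · congr 1
    ext w
    simp only [mem_union, mem_filter, mem_inter, mem_sdiff, mem_univ, true_and]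
    constructor
    · rintro (⟨⟨_, _⟩, hP⟩ | ⟨⟨_, _⟩, hP⟩) <;> exact hP
    · rintro ⟨hw1, hw2⟩
      have hwa : w ≠ a := by
        rintro rfl
        rcases le_total w b with h | h
        · rw [min_eq_left h] at hw1; exact lt_irrefl w hw1
        · rw [max_eq_left h] at hw2; exact lt_irrefl w hw2
      have hwb : w ≠ b := by
        rintro rfl
        rcases le_total a w with h | h
        · rw [max_eq_right h] at hw2; exact lt_irrefl w hw2
        · rw [min_eq_right h] at hw1; exact lt_irrefl w hw1
      by_cases hσ : w ∈ σ
      · left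
        refine ⟨⟨hσ, ?_⟩, hw1, hw2⟩
        by_contra hτ
        have hm : w ∈ σ \ τ := mem_sdiff.mpr ⟨hσ, hτ⟩
        rw [ha, mem_singleton] at hm
        exact hwa hm
      · right
        refine ⟨⟨hσ, fun hτ => ?_⟩, hw1, hw2⟩
        have hm : w ∈ τ \ σ := mem_sdiff.mpr ⟨hτ, hσ⟩
        rw [hb, mem_singleton] at hm
        exact hwb hm
  · rw [Finset.disjoint_left]
    intro x hx hx2
    rw [mem_filter, mem_inter] at hx
    rw [mem_filter, mem_inter, mem_sdiff, mem_sdiff] at hx2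
    exact hx2.1.1.2 hx.1.1

/-- rank function -/
def rnk (v : V) : ℕ := (univ.filter (· < v)).card

lemma aux_card_between (a b : V) (hab : a < b) :
    (univ.filter fun w => a < w ∧ w < b).card + rnk a + 1 = rnk b := by
  have h : univ.filter (· < b) =
      (univ.filter (· < a)) ∪ ({a} : Finset V) ∪ (univ.filter fun w => a < w ∧ w < b) := by
    ext w
    simp only [mem_union, mem_filter, mem_univ, true_and, mem_singleton]
    constructor
    · intro hw
      rcases lt_trichotomy w a with h1 | h1 | h1
      · exact Or.inl (Or.inl h1)
      · exact Or.inl (Or.inr h1)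
      · exact Or.inr ⟨h1, hw⟩
    · rintro ((h1 | rfl) | ⟨h1, h2⟩)
      · exact h1.trans hab
      · exact hab
      · exact h2
  have hd1 : Disjoint (univ.filter (· < a)) ({a} : Finset V) := by
    simp [Finset.disjoint_singleton_right]
  have hd2 : Disjoint ((univ.filter (· < a)) ∪ ({a} : Finset V))
      (univ.filter fun w => a < w ∧ w < b) := by
    rw [Finset.disjoint_left]
    intro x hx hx2
    rw [mem_filter] at hx2
    rw [mem_union, mem_filter, mem_singleton] at hx
    rcases hx with ⟨_, h1⟩ | rfl
    · exact absurd (h1.trans hx2.2.1) (lt_irrefl x)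
    · exact absurd hx2.2.1 (lt_irrefl x)
  rw [rnk, rnk, h, Finset.card_union_of_disjoint hd2, Finset.card_union_of_disjoint hd1,
    card_singleton]
  omega

lemma aux_epsSign_mul_compl (σ τ : Finset V) (a b : V)
    (ha : σ \ τ = {a}) (hb : τ \ σ = {b}) (hab : a ≠ b) :
    epsSign σ τ * epsSign (univ \ σ) (univ \ τ) = -(-1:ℝ) ^ (rnk a + rnk b) := by
  have hca : (univ \ σ) \ (univ \ τ) = {b} := by
    rw [← hb]; ext w; simp only [mem_sdiff, mem_univ, true_and, not_and, not_not]; tauto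
  have hcb : (univ \ τ) \ (univ \ σ) = {a} := by
    rw [← ha]; ext w; simp only [mem_sdiff, mem_univ, true_and, not_and, not_not]; tauto
  rw [aux_epsSign_eq σ τ a b ha hb, aux_epsSign_eq _ _ b a hca hcb]
  rw [min_comm b a, max_comm b a, ← pow_add, aux_between_card σ τ a b ha hb]
  set E := (univ.filter fun w => min a b < w ∧ w < max a b).card with hE
  have hodd : Odd (E + (rnk a + rnk b)) := by
    rcases hab.lt_or_gt with h | h
    · have h5 := aux_card_between a b h
      rw [hE, min_eq_left h.le, max_eq_right h.le]
      exact ⟨(univ.filter fun w => a < w ∧ w < b).card + rnk a, by omega⟩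
    · have h5 := aux_card_between b a h
      rw [hE, min_eq_right h.le, max_eq_left h.le]
      exact ⟨(univ.filter fun w => b < w ∧ w < a).card + rnk b, by omega⟩
  have h2 : (-1:ℝ) ^ E * (-1:ℝ) ^ (rnk a + rnk b) = -1 := by
    rw [← pow_add]; exact hodd.neg_one_pow
  have hsq : (-1:ℝ) ^ (rnk a + rnk b) * (-1:ℝ) ^ (rnk a + rnk b) = 1 := by
    rw [← pow_add]; exact Even.neg_one_pow ⟨rnk a + rnk b, rfl⟩
  calc (-1:ℝ) ^ E = (-1:ℝ) ^ E * ((-1:ℝ) ^ (rnk a + rnk b) * (-1:ℝ) ^ (rnk a + rnk b)) := by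
        rw [hsq, mul_one]
    _ = ((-1:ℝ) ^ E * (-1:ℝ) ^ (rnk a + rnk b)) * (-1:ℝ) ^ (rnk a + rnk b) := by ring
    _ = -(-1:ℝ) ^ (rnk a + rnk b) := by rw [h2]; ring

lemma aux_singletons (σ τ : Finset V) (s : ℕ) (hσ : σ.card = s) (hτ : τ.card = s)
    (hcond : (σ ∩ τ).card + 1 = s) :
    ∃ a b : V, σ \ τ = {a} ∧ τ \ σ = {b} ∧ a ≠ b := by
  have h1 : (σ \ τ).card = 1 := by
    have h := Finset.card_inter_add_card_sdiff σ τ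
    omega
  have h2 : (τ \ σ).card = 1 := by
    have h := Finset.card_inter_add_card_sdiff τ σ
    rw [Finset.inter_comm] at h
    omega
  obtain ⟨a, ha⟩ := Finset.card_eq_one.mp h1
  obtain ⟨b, hb⟩ := Finset.card_eq_one.mp h2
  refine ⟨a, b, ha, hb, ?_⟩
  intro h
  subst h
  have h3 : a ∈ σ \ τ := by rw [ha]; exact mem_singleton_self a
  have h4 : a ∈ τ \ σ := by rw [hb]; exact mem_singleton_self a
  rw [mem_sdiff] at h3 h4
  exact h3.2 h4.1

lemma aux_sign_inv (N : ℕ) : ((-1:ℝ)^N)⁻¹ = (-1:ℝ)^N := by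
  rw [← inv_pow]; norm_num

lemma aux_sign_sq (N : ℕ) : (-1:ℝ)^N * (-1:ℝ)^N = 1 := by
  rw [← pow_add]; exact Even.neg_one_pow ⟨N, rfl⟩

lemma aux_dual_offdiag (ω : V → ℝ) (hω : ∀ v, 0 < ω v) (σ τ : Finset V) (s : ℕ)
    (hσ : σ.card = s) (hτ : τ.card = s) (hcond : (σ ∩ τ).card + 1 = s) :
    epsSign σ τ * (∏ v ∈ τ \ σ, ω v)
      + ((-1:ℝ)^(∑ v ∈ σ, rnk v) * (∏ v ∈ σ, ω v)⁻¹)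
        * (epsSign (univ \ σ) (univ \ τ) * ∏ v ∈ (univ \ τ) \ (univ \ σ), ω v)
        * ((-1:ℝ)^(∑ v ∈ τ, rnk v) * (∏ v ∈ τ, ω v)⁻¹)⁻¹ = 0 := by
  obtain ⟨a, b, ha, hb, hab⟩ := aux_singletons σ τ s hσ hτ hcond
  have hset : (univ \ τ) \ (univ \ σ) = σ \ τ := by
    ext w; simp only [mem_sdiff, mem_univ, true_and, not_and, not_not]; tauto
  have hsub1 : σ ∩ τ ⊆ σ := Finset.inter_subset_left
  have hsub2 : τ ∩ σ ⊆ τ := Finset.inter_subset_left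
  have hd1 : σ \ (σ ∩ τ) = σ \ τ := Finset.sdiff_inter_self_left σ τ
  have hd2 : τ \ (τ ∩ σ) = τ \ σ := Finset.sdiff_inter_self_left τ σ
  have e1 : ∏ v ∈ τ \ σ, ω v = ω b := by rw [hb, Finset.prod_singleton]
  have e2 : ∏ v ∈ (univ \ τ) \ (univ \ σ), ω v = ω a := by
    rw [hset, ha, Finset.prod_singleton]
  have e3 : ∏ v ∈ σ, ω v = ω a * ∏ v ∈ σ ∩ τ, ω v := by
    rw [← Finset.prod_sdiff hsub1, hd1, ha, Finset.prod_singleton]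
  have e4 : ∏ v ∈ τ, ω v = ω b * ∏ v ∈ σ ∩ τ, ω v := by
    rw [← Finset.prod_sdiff hsub2, hd2, hb, Finset.prod_singleton, Finset.inter_comm]
  have e5 : ∑ v ∈ σ, rnk v = rnk a + ∑ v ∈ σ ∩ τ, rnk v := by
    rw [← Finset.sum_sdiff hsub1, hd1, ha, Finset.sum_singleton]
  have e6 : ∑ v ∈ τ, rnk v = rnk b + ∑ v ∈ σ ∩ τ, rnk v := by
    rw [← Finset.sum_sdiff hsub2, hd2, hb, Finset.sum_singleton, Finset.inter_comm]
  have h7 := aux_epsSign_mul_compl σ τ a b ha hb hab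
  have h8 := aux_epsSign_sq σ τ a b ha hb
  have hE' : epsSign (univ \ σ) (univ \ τ)
      = -((-1:ℝ) ^ (rnk a + rnk b)) * epsSign σ τ := by
    calc epsSign (univ \ σ) (univ \ τ)
        = (epsSign σ τ * epsSign σ τ) * epsSign (univ \ σ) (univ \ τ) := by rw [h8, one_mul]
      _ = epsSign σ τ * (epsSign σ τ * epsSign (univ \ σ) (univ \ τ)) := by ring
      _ = epsSign σ τ * (-(-1:ℝ) ^ (rnk a + rnk b)) := by rw [h7]
      _ = -((-1:ℝ) ^ (rnk a + rnk b)) * epsSign σ τ := by ring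
  rw [e1, e2, e3, e4, e5, e6, hE']
  rw [pow_add, pow_add, pow_add]
  have hwa := (hω a).ne'
  have hwb := (hω b).ne'
  have hW : (∏ v ∈ σ ∩ τ, ω v) ≠ 0 := (Finset.prod_pos (fun v _ => hω v)).ne'
  set E := epsSign σ τ
  set p := (-1:ℝ)^(rnk a)
  set q := (-1:ℝ)^(rnk b)
  set S := (-1:ℝ)^(∑ v ∈ σ ∩ τ, rnk v)
  have hp : p * p = 1 := aux_sign_sq _
  have hq : q * q = 1 := aux_sign_sq _
  have hS : S * S = 1 := aux_sign_sq _
  have hinv : (q * S * (ω b * ∏ v ∈ σ ∩ τ, ω v)⁻¹)⁻¹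
      = q * S * (ω b * ∏ v ∈ σ ∩ τ, ω v) := by
    rw [mul_inv, mul_inv, inv_inv, aux_sign_inv, aux_sign_inv]
  rw [hinv]
  field_simp
  have h9 : ∀ N : ℕ, (-1:ℝ)^(N*2) = 1 := fun N => by
    rw [mul_comm, pow_mul, neg_one_sq, one_pow]
  ring_nf
  simp only [sq, hp, hq, hS, mul_one]
  ring

lemma aux_sym_offdiag (ω : V → ℝ) (hω : ∀ v, 0 < ω v) (σ τ : Finset V) (s : ℕ)
    (hσ : σ.card = s) (hτ : τ.card = s) (hcond : (σ ∩ τ).card + 1 = s) :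
    Real.sqrt (∏ v ∈ τ, ω v) * (epsSign τ σ * ∏ v ∈ σ \ τ, ω v) * (Real.sqrt (∏ v ∈ σ, ω v))⁻¹
      = Real.sqrt (∏ v ∈ σ, ω v) * (epsSign σ τ * ∏ v ∈ τ \ σ, ω v) *
        (Real.sqrt (∏ v ∈ τ, ω v))⁻¹ := by
  obtain ⟨a, b, ha, hb, hab⟩ := aux_singletons σ τ s hσ hτ hcond
  have heps : epsSign τ σ = epsSign σ τ := by
    rw [aux_epsSign_eq τ σ b a hb ha, aux_epsSign_eq σ τ a b ha hb, Finset.inter_comm,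
      min_comm, max_comm]
  have hsub1 : σ ∩ τ ⊆ σ := Finset.inter_subset_left
  have hsub2 : τ ∩ σ ⊆ τ := Finset.inter_subset_left
  have hd1 : σ \ (σ ∩ τ) = σ \ τ := Finset.sdiff_inter_self_left σ τ
  have hd2 : τ \ (τ ∩ σ) = τ \ σ := Finset.sdiff_inter_self_left τ σ
  have e1 : ∏ v ∈ τ \ σ, ω v = ω b := by rw [hb, Finset.prod_singleton]
  have e2 : ∏ v ∈ σ \ τ, ω v = ω a := by rw [ha, Finset.prod_singleton]
  have e3 : ∏ v ∈ σ, ω v = ω a * ∏ v ∈ σ ∩ τ, ω v := by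
    rw [← Finset.prod_sdiff hsub1, hd1, ha, Finset.prod_singleton]
  have e4 : ∏ v ∈ τ, ω v = ω b * ∏ v ∈ σ ∩ τ, ω v := by
    rw [← Finset.prod_sdiff hsub2, hd2, hb, Finset.prod_singleton, Finset.inter_comm]
  have hWσ : 0 < ∏ v ∈ σ, ω v := Finset.prod_pos (fun v _ => hω v)
  have hWτ : 0 < ∏ v ∈ τ, ω v := Finset.prod_pos (fun v _ => hω v)
  have hsσ : (0:ℝ) < Real.sqrt (∏ v ∈ σ, ω v) := Real.sqrt_pos.mpr hWσ
  have hsτ : (0:ℝ) < Real.sqrt (∏ v ∈ τ, ω v) := Real.sqrt_pos.mpr hWτ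
  have hmσ : Real.sqrt (∏ v ∈ σ, ω v) * Real.sqrt (∏ v ∈ σ, ω v) = ∏ v ∈ σ, ω v :=
    Real.mul_self_sqrt hWσ.le
  have hmτ : Real.sqrt (∏ v ∈ τ, ω v) * Real.sqrt (∏ v ∈ τ, ω v) = ∏ v ∈ τ, ω v :=
    Real.mul_self_sqrt hWτ.le
  rw [heps, e1, e2]
  field_simp
  ring_nf
  rw [sq, sq, hmσ, hmτ, e3, e4]
  ring

end AuxSign

/-- Duality between the down-Laplacian spectrum of `X` in dimension `k`
and the down-Laplacian spectrum of `X_k^*` in dimension `n-k-2`: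
`λ_i^↓(L_k^{ω,down}(X)) + λ_{f_k(X)+1-i}^↓(L_{n-k-2}^{ω,down}(X_k^*)) = Σ_{v∈V} ω(v)`. -/
theorem statement1 {V : Type*} [Fintype V] [LinearOrder V]
    (X : AbstractSC V) (ω : V → ℝ) (hω : ∀ v, 0 < ω v)
    (n : ℕ) (hn : Fintype.card V = n)
    (hvert : ∀ v : V, ({v} : Finset V) ∈ X.faces)
    (k : ℕ) (hk : (k : ℤ) ≤ X.dimension)
    (Y : AbstractSC V)
    (hY : ∀ τ : Finset V, τ ∈ Y.faces ↔
      ∃ σ ∈ X.faces, σ.card = k + 1 ∧ τ ⊆ univ \ σ)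
    (i : ℕ) (hi1 : 1 ≤ i) (hi2 : i ≤ (X.facesOfCard (k + 1)).card) :
    eigDesc (lapDown X ω (k + 1)) i +
        eigDesc (lapDown Y ω (n - k - 1)) ((X.facesOfCard (k + 1)).card + 1 - i) =
      ∑ v, ω v := by
  classical
  obtain ⟨σ₀, hσ₀f, hσ₀c⟩ : ∃ σ, σ ∈ X.faces ∧ σ.card = k + 1 := by
    have h0 : X.faces.Nonempty := ⟨∅, X.empty_mem⟩
    obtain ⟨σ₁, hσ₁, hcard⟩ := Finset.exists_mem_eq_sup X.faces h0 Finset.card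
    have h1 : k + 1 ≤ σ₁.card := by
      unfold AbstractSC.dimension at hk
      rw [hcard] at hk
      exact_mod_cast (by omega : (k:ℤ) + 1 ≤ (σ₁.card : ℤ))
    obtain ⟨σ₂, hsub, hc⟩ := Finset.exists_subset_card_eq h1
    exact ⟨σ₂, X.down_closed hσ₁ hsub, hc⟩
  have hkn : k + 1 ≤ n := by
    have h := Finset.card_le_card (Finset.subset_univ σ₀)
    rw [hσ₀c, Finset.card_univ, hn] at h
    exact h
  have hYc : ∀ τ : Finset V, (τ ∈ Y.faces ∧ τ.card = n - k - 1) ↔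
      (univ \ τ ∈ X.faces ∧ (univ \ τ).card = k + 1) := by
    intro τ
    constructor
    · rintro ⟨hf, hc⟩
      obtain ⟨σ, hσf, hσc, hsub⟩ := (hY τ).mp hf
      have hcards : (univ \ σ).card = n - k - 1 := by
        rw [Finset.card_sdiff_of_subset (Finset.subset_univ σ), Finset.card_univ, hn, hσc]
        omega
      have hτσ : τ = univ \ σ := Finset.eq_of_subset_of_card_le hsub (by rw [hcards, hc])
      subst hτσ
      rw [Finset.sdiff_sdiff_eq_self (Finset.subset_univ σ)]
      exact ⟨hσf, hσc⟩
    · rintro ⟨hf, hc⟩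
      have hcc : τ.card = n - k - 1 := by
        have h2 : (univ \ τ).card = n - τ.card := by
          rw [Finset.card_sdiff_of_subset (Finset.subset_univ τ), Finset.card_univ, hn]
        have h3 : τ.card ≤ n := by
          have h := Finset.card_le_card (Finset.subset_univ τ)
          rwa [Finset.card_univ, hn] at h
        omega
      refine ⟨(hY τ).mpr ⟨univ \ τ, hf, hc, ?_⟩, hcc⟩
      rw [Finset.sdiff_sdiff_eq_self (Finset.subset_univ τ)]
  let e : X.Face (k + 1) ≃ Y.Face (n - k - 1) :=
    { toFun := fun σ => ⟨univ \ σ.1, (hYc (univ \ σ.1)).mpr (by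
        rw [Finset.sdiff_sdiff_eq_self (Finset.subset_univ σ.1)]; exact σ.2)⟩
      invFun := fun τ => ⟨univ \ τ.1, (hYc τ.1).mp τ.2⟩
      left_inv := fun σ => Subtype.ext (Finset.sdiff_sdiff_eq_self (Finset.subset_univ σ.1))
      right_inv := fun τ => Subtype.ext (Finset.sdiff_sdiff_eq_self (Finset.subset_univ τ.1)) }
  set A := lapDown X ω (k + 1) with hAdef
  set B := lapDown Y ω (n - k - 1) with hBdef
  set B' : Matrix (X.Face (k + 1)) (X.Face (k + 1)) ℝ := B.submatrix e e with hB'def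
  have hcpB : B'.charpoly = B.charpoly := by
    have h := Matrix.charpoly_reindex (R := ℝ) e.symm B
    have h2 : (Matrix.reindex e.symm e.symm B) = B' := by
      ext σ τ
      rw [hB'def]
      simp [Matrix.reindex_apply, Matrix.submatrix_apply]
    rw [h2] at h
    exact h
  set c := ∑ v, ω v with hcdef
  set g : X.Face (k + 1) → ℝ :=
    fun σ => (-1:ℝ) ^ (∑ v ∈ σ.1, rnk v) * (∏ v ∈ σ.1, ω v)⁻¹ with hgdef
  have hgne : ∀ σ, g σ ≠ 0 := fun σ =>
    mul_ne_zero (pow_ne_zero _ (by norm_num))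
      (inv_ne_zero (Finset.prod_pos (fun v _ => hω v)).ne')
  have hkey : ∀ σ τ : X.Face (k + 1),
      (c • (1 : Matrix (X.Face (k + 1)) (X.Face (k + 1)) ℝ) - A) σ τ
        = g σ * B' σ τ * (g τ)⁻¹ := by
    intro σ τ
    by_cases hστ : σ = τ
    · subst hστ
      have hBdiag : B' σ σ = ∑ v ∈ univ \ σ.1, ω v := by
        show B (e σ) (e σ) = _
        simp only [hBdef, lapDown, if_true]
        rfl
      have hLHS : (c • (1 : Matrix (X.Face (k + 1)) (X.Face (k + 1)) ℝ) - A) σ σ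
          = c - ∑ v ∈ σ.1, ω v := by
        rw [Matrix.sub_apply, Matrix.smul_apply, Matrix.one_apply_eq, smul_eq_mul, mul_one]
        simp only [hAdef, lapDown, if_true]
      rw [hLHS, hBdiag]
      have hsum : ∑ v ∈ univ \ σ.1, ω v + ∑ v ∈ σ.1, ω v = c := by
        rw [hcdef]
        exact Finset.sum_sdiff (Finset.subset_univ σ.1)
      rw [mul_comm (g σ), mul_assoc, mul_inv_cancel₀ (hgne σ), mul_one]
      linarith
    · have hne1 : σ.1 ≠ τ.1 := fun h => hστ (Subtype.ext h)
      have heστ : e σ ≠ e τ := fun h => hστ (e.injective h)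
      have hA : A σ τ = if (σ.1 ∩ τ.1).card + 1 = k + 1 then
          epsSign σ.1 τ.1 * ∏ v ∈ τ.1 \ σ.1, ω v else 0 := by
        simp only [hAdef, lapDown]
        rw [if_neg hστ]
      have hBval : B' σ τ = if ((univ \ σ.1) ∩ (univ \ τ.1)).card + 1 = n - k - 1 then
          epsSign (univ \ σ.1) (univ \ τ.1) * ∏ v ∈ (univ \ τ.1) \ (univ \ σ.1), ω v
          else 0 := by
        show B (e σ) (e τ) = _
        simp only [hBdef, lapDown]
        rw [if_neg heστ]
        rfl
      have hLHS : (c • (1 : Matrix (X.Face (k + 1)) (X.Face (k + 1)) ℝ) - A) σ τ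
          = -(A σ τ) := by
        rw [Matrix.sub_apply, Matrix.smul_apply, Matrix.one_apply_ne hστ, smul_eq_mul,
          mul_zero, zero_sub]
      have hcapσ : σ.1.card = k + 1 := σ.2.2
      have hcapτ : τ.1.card = k + 1 := τ.2.2
      have huge : (σ.1 ∪ τ.1).card + (σ.1 ∩ τ.1).card = (k + 1) + (k + 1) := by
        rw [Finset.card_union_add_card_inter, hcapσ, hcapτ]
      have hulb : k + 2 ≤ (σ.1 ∪ τ.1).card := by
        have hssub : σ.1 ⊂ σ.1 ∪ τ.1 := by
          refine Finset.ssubset_iff_subset_ne.mpr ⟨Finset.subset_union_left, ?_⟩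
          intro h
          have hts : τ.1 ⊆ σ.1 := by
            rw [h]
            exact Finset.subset_union_right
          exact hne1 (Finset.eq_of_subset_of_card_le hts
            (le_of_eq (hcapσ.trans hcapτ.symm))).symm
        have := Finset.card_lt_card hssub
        omega
      have huub : (σ.1 ∪ τ.1).card ≤ n := by
        have h := Finset.card_le_card (Finset.subset_univ (σ.1 ∪ τ.1))
        rwa [Finset.card_univ, hn] at h
      have hccap : ((univ \ σ.1) ∩ (univ \ τ.1)).card + (σ.1 ∪ τ.1).card = n := by
        have hcompl : (univ \ σ.1) ∩ (univ \ τ.1) = univ \ (σ.1 ∪ τ.1) := by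
          ext w
          simp only [Finset.mem_sdiff, Finset.mem_inter, Finset.mem_union, Finset.mem_univ,
            true_and]
          tauto
        rw [hcompl, Finset.card_sdiff_of_subset (Finset.subset_univ _), Finset.card_univ, hn]
        omega
      by_cases hcond : (σ.1 ∩ τ.1).card + 1 = k + 1
      · have hcond' : ((univ \ σ.1) ∩ (univ \ τ.1)).card + 1 = n - k - 1 := by omega
        rw [hLHS, hA, if_pos hcond, hBval, if_pos hcond']
        have hmain := aux_dual_offdiag ω hω σ.1 τ.1 (k + 1) hcapσ hcapτ hcond
        simp only [hgdef]
        linarith [hmain]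
      · have hcond' : ¬(((univ \ σ.1) ∩ (univ \ τ.1)).card + 1 = n - k - 1) := by omega
        rw [hLHS, hA, if_neg hcond, hBval, if_neg hcond']
        simp
  have hcp2 : (c • (1 : Matrix (X.Face (k + 1)) (X.Face (k + 1)) ℝ) - A).charpoly
      = B'.charpoly :=
    aux_charpoly_conj_diag g hgne B' _ hkey
  -- Hermitian conjugate of A
  set gs : X.Face (k + 1) → ℝ := fun σ => Real.sqrt (∏ v ∈ σ.1, ω v) with hgsdef
  have hgsne : ∀ σ, gs σ ≠ 0 := fun σ =>
    (Real.sqrt_pos.mpr (Finset.prod_pos (fun v _ => hω v))).ne'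
  set M : Matrix (X.Face (k + 1)) (X.Face (k + 1)) ℝ :=
    Matrix.of (fun σ τ => gs σ * A σ τ * (gs τ)⁻¹) with hMdef
  have hMA : M.charpoly = A.charpoly :=
    aux_charpoly_conj_diag gs hgsne A M (fun σ τ => rfl)
  have hherm : M.IsHermitian := by
    apply Matrix.IsHermitian.ext
    intro σ τ
    rw [star_trivial]
    show gs τ * A τ σ * (gs σ)⁻¹ = gs σ * A σ τ * (gs τ)⁻¹
    by_cases hστ : σ = τ
    · subst hστ; rfl
    · have hτσ : τ ≠ σ := Ne.symm hστ
      have hAστ : A σ τ = if (σ.1 ∩ τ.1).card + 1 = k + 1 then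
          epsSign σ.1 τ.1 * ∏ v ∈ τ.1 \ σ.1, ω v else 0 := by
        simp only [hAdef, lapDown]
        rw [if_neg hστ]
      have hAτσ : A τ σ = if (τ.1 ∩ σ.1).card + 1 = k + 1 then
          epsSign τ.1 σ.1 * ∏ v ∈ σ.1 \ τ.1, ω v else 0 := by
        simp only [hAdef, lapDown]
        rw [if_neg hτσ]
      by_cases hcond : (σ.1 ∩ τ.1).card + 1 = k + 1
      · have hcond2 : (τ.1 ∩ σ.1).card + 1 = k + 1 := by
          rwa [Finset.inter_comm]
        rw [hAστ, if_pos hcond, hAτσ, if_pos hcond2]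
        exact aux_sym_offdiag ω hω σ.1 τ.1 (k + 1) σ.2.2 τ.2.2 hcond
      · have hcond2 : ¬((τ.1 ∩ σ.1).card + 1 = k + 1) := by
          rwa [Finset.inter_comm]
        rw [hAστ, if_neg hcond, hAτσ, if_neg hcond2]
        simp
  have hcardA : Multiset.card (spec A) = Fintype.card (X.Face (k + 1)) := by
    rw [spec, ← hMA]
    exact aux_card_roots_hermitian M hherm
  have hspecB' : spec B' = (spec A).map (fun x => c - x) := by
    rw [spec, ← hcp2, spec]
    exact aux_roots_smul_one_sub A c (fun p hp => aux_roots_comp p hp c)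
  have hF : (X.facesOfCard (k + 1)).card = Fintype.card (X.Face (k + 1)) := by
    rw [Fintype.card_subtype]
    congr 1
    ext σ
    simp [AbstractSC.facesOfCard]
  have heigB : eigDesc B ((X.facesOfCard (k + 1)).card + 1 - i)
      = eigDesc B' ((X.facesOfCard (k + 1)).card + 1 - i) := by
    unfold eigDesc spec
    rw [← hcpB]
  rw [heigB]
  exact aux_eig_sum A B' c hcardA hspecB' i _ hF hi1 hi2
end

section
/- Let X be an abstract simplicial complex on a finite vertex set V of size n with vertex weight function ω. For every 0 ≤ k ≤ dim(X), the largest eigenvalue of L_k^ω(X) satisfies λ_1^↓(L_k^ω(X)) ≤ Σ_{v∈V} ω(v). Moreover, if f_k(X) > C(n−1, k+1) or f_{k+1}(X) > C(n−1, k+2), then Σ_{v∈V} ω(v) is an eigenvalue of L_k^ω(X) with multiplicity at least max{ f_k(X) + f_{k+1}(X) − C(n, k+2), f_k(X) − C(n−1, k+1), f_{k+1}(X) − C(n−1, k+2) }. -/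
open Finset

variable {V : Type*} [Fintype V] [LinearOrder V]

set_option linter.unusedSectionVars false
set_option maxHeartbeats 1000000
namespace S3
open Finset

variable {V : Type*} [Fintype V] [LinearOrder V]

def sgn (v : V) (ρ : Finset V) : ℝ := (-1 : ℝ) ^ (ρ.filter (· < v)).card

noncomputable def bmat (ω : V → ℝ) (σ ρ : Finset V) : ℝ :=
  if σ ⊆ ρ ∧ σ.card + 1 = ρ.card then ∑ v ∈ ρ \ σ, sgn v ρ * Real.sqrt (ω v) else 0

lemma sgn_mul_self (v : V) (ρ : Finset V) : sgn v ρ * sgn v ρ = 1 := by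
  unfold sgn; rw [← pow_add, ← two_mul, pow_mul]; norm_num

lemma sdiff_singleton_of_card {σ ρ : Finset V} (hs : σ ⊆ ρ) (hc : σ.card + 1 = ρ.card) :
    ∃ v, v ∉ σ ∧ ρ \ σ = {v} ∧ ρ = insert v σ := by
  have h1 : (ρ \ σ).card = 1 := by rw [card_sdiff_of_subset hs]; omega
  obtain ⟨v, hv⟩ := card_eq_one.mp h1
  have hvm : v ∈ ρ \ σ := hv ▸ mem_singleton_self v
  refine ⟨v, (mem_sdiff.mp hvm).2, hv, ?_⟩
  apply Finset.Subset.antisymm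
  · intro x hx
    by_cases hxσ : x ∈ σ
    · exact mem_insert_of_mem hxσ
    · have : x ∈ ρ \ σ := mem_sdiff.mpr ⟨hx, hxσ⟩
      rw [hv, mem_singleton] at this
      exact this ▸ mem_insert_self x σ
  · exact insert_subset (mem_sdiff.mp hvm).1 hs

lemma bmat_insert (ω : V → ℝ) {σ : Finset V} {v : V} (hv : v ∉ σ) :
    bmat ω σ (insert v σ) = sgn v (insert v σ) * Real.sqrt (ω v) := by
  unfold bmat
  rw [if_pos ⟨subset_insert v σ, (card_insert_of_notMem hv).symm⟩,
    insert_sdiff_cancel hv, sum_singleton]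

lemma bmat_eq_zero_of_not_subset (ω : V → ℝ) {σ ρ : Finset V} (h : ¬ σ ⊆ ρ) :
    bmat ω σ ρ = 0 := by
  unfold bmat; rw [if_neg (fun hc => h hc.1)]

lemma sgn_erase_lt {a b : V} {τ : Finset V} (hab : a < b) (ha : a ∈ τ) :
    sgn b (τ.erase a) = - sgn b τ := by
  unfold sgn
  have h1 : (τ.erase a).filter (· < b) = (τ.filter (· < b)).erase a := by
    rw [Finset.filter_erase]
  have h2 : a ∈ τ.filter (· < b) := mem_filter.mpr ⟨ha, hab⟩
  rw [h1, card_erase_of_mem h2]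
  have h3 : 1 ≤ (τ.filter (· < b)).card := card_pos.mpr ⟨a, h2⟩
  obtain ⟨c, hc⟩ : ∃ c, (τ.filter (· < b)).card = c + 1 := ⟨(τ.filter (· < b)).card - 1, by omega⟩
  rw [hc, pow_succ]
  simp

lemma sgn_erase_gt {a b : V} {τ : Finset V} (hab : a < b) :
    sgn a (τ.erase b) = sgn a τ := by
  unfold sgn
  congr 1
  rw [Finset.filter_erase, erase_eq_of_notMem]
  intro hb
  exact absurd (mem_filter.mp hb).2 (not_lt.mpr hab.le)

/-- The "∂∂ = 0" relation. -/
lemma dd (ω : V → ℝ) (σ τ : Finset V) (hc : σ.card + 2 = τ.card) :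
    ∑ u ∈ τ, sgn u τ * Real.sqrt (ω u) * bmat ω σ (τ.erase u) = 0 := by
  by_cases hστ : σ ⊆ τ
  · have h2 : (τ \ σ).card = 2 := by rw [card_sdiff_of_subset hστ]; omega
    obtain ⟨a, b, hab, hab2⟩ := card_eq_two.mp h2
    -- wlog a < b
    wlog hlt : a < b generalizing a b
    · exact this b a hab.symm (by rw [hab2]; exact pair_comm a b) (by
        rcases lt_or_gt_of_ne hab with h | h
        · exact absurd h hlt
        · exact h)
    have haτ : a ∈ τ := (mem_sdiff.mp (by rw [hab2]; exact mem_insert_self a {b})).1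
    have haσ : a ∉ σ := (mem_sdiff.mp (by rw [hab2]; exact mem_insert_self a {b})).2
    have hbτ : b ∈ τ := (mem_sdiff.mp (by rw [hab2]; simp)).1
    have hbσ : b ∉ σ := (mem_sdiff.mp (by rw [hab2]; simp)).2
    have hsub : ({a, b} : Finset V) ⊆ τ := by
      intro x hx; rcases mem_insert.mp hx with h | h
      · exact h ▸ haτ
      · exact (mem_singleton.mp h) ▸ hbτ
    rw [← Finset.sum_subset hsub]
    · rw [Finset.sum_pair hab]
      -- evaluate the two bmat terms
      have hea : τ.erase a = insert b σ := by
        have hsa : σ ⊆ τ.erase a := fun x hx => mem_erase.mpr ⟨fun h => haσ (h ▸ hx), hστ hx⟩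
        have hca : σ.card + 1 = (τ.erase a).card := by rw [card_erase_of_mem haτ]; omega
        obtain ⟨v, hv1, hv2, hv3⟩ := sdiff_singleton_of_card hsa hca
        have : v ∈ τ \ σ := by
          have := hv2 ▸ mem_singleton_self v
          have hvm := mem_sdiff.mp this
          exact mem_sdiff.mpr ⟨mem_of_mem_erase hvm.1, hvm.2⟩
        rw [hab2, mem_insert, mem_singleton] at this
        rcases this with h | h
        · exfalso; subst h
          have := hv2 ▸ mem_singleton_self v
          exact (mem_erase.mp (mem_sdiff.mp this).1).1 rfl
        · rw [hv3, h]
      have heb : τ.erase b = insert a σ := by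
        have hsb : σ ⊆ τ.erase b := fun x hx => mem_erase.mpr ⟨fun h => hbσ (h ▸ hx), hστ hx⟩
        have hcb : σ.card + 1 = (τ.erase b).card := by rw [card_erase_of_mem hbτ]; omega
        obtain ⟨v, hv1, hv2, hv3⟩ := sdiff_singleton_of_card hsb hcb
        have : v ∈ τ \ σ := by
          have := hv2 ▸ mem_singleton_self v
          have hvm := mem_sdiff.mp this
          exact mem_sdiff.mpr ⟨mem_of_mem_erase hvm.1, hvm.2⟩
        rw [hab2, mem_insert, mem_singleton] at this
        rcases this with h | h
        · rw [hv3, h]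
        · exfalso; subst h
          have := hv2 ▸ mem_singleton_self v
          exact (mem_erase.mp (mem_sdiff.mp this).1).1 rfl
      rw [hea, heb, bmat_insert ω hbσ, bmat_insert ω haσ, ← hea, ← heb,
        sgn_erase_lt hlt haτ, sgn_erase_gt hlt]
      ring
    · intro u huτ hu
      by_cases huσ : u ∈ σ
      · rw [bmat_eq_zero_of_not_subset ω (fun h => (mem_erase.mp (h huσ)).1 rfl)]; ring
      · exfalso
        exact hu (by rw [← hab2]; exact mem_sdiff.mpr ⟨huτ, huσ⟩)
  · apply Finset.sum_eq_zero
    intro u hu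
    rw [bmat_eq_zero_of_not_subset ω (fun h => hστ (h.trans (erase_subset u τ)))]
    ring

lemma sgn_mul_sgn_aux (c : Finset V) (a b : V) (hab : a < b) (ha : a ∉ c) (hb : b ∉ c) :
    sgn a (insert a (insert b c)) * sgn b (insert a (insert b c)) =
      - ((-1 : ℝ) ^ (c.filter fun w => a < w ∧ w < b).card) := by
  unfold sgn
  set ρ := insert a (insert b c) with hρ
  have h1 : ρ.filter (· < a) = c.filter (· < a) := by
    rw [hρ, filter_insert, filter_insert, if_neg (lt_irrefl a), if_neg (not_lt.mpr hab.le)]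
  have h2 : ρ.filter (· < b) = insert a (c.filter (· < b)) := by
    rw [hρ, filter_insert, filter_insert, if_pos hab, if_neg (lt_irrefl b)]
  have hanm : a ∉ c.filter (· < b) := fun h => ha (mem_filter.mp h).1
  have h3 : (ρ.filter (· < b)).card = (c.filter (· < b)).card + 1 := by
    rw [h2, card_insert_of_notMem hanm]
  -- split filter (< b) over c
  have h4 : (c.filter (· < b)).card
      = (c.filter (· < a)).card + (c.filter fun w => a < w ∧ w < b).card := by
    rw [← card_union_of_disjoint]
    · congr 1
      ext w
      simp only [mem_union, mem_filter]
      constructor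
      · rintro ⟨hw, hwb⟩
        rcases lt_trichotomy w a with h | h | h
        · exact Or.inl ⟨hw, h⟩
        · exact absurd hw (h ▸ ha)
        · exact Or.inr ⟨hw, h, hwb⟩
      · rintro (⟨hw, hwa⟩ | ⟨hw, _, hwb⟩)
        · exact ⟨hw, hwa.trans hab⟩
        · exact ⟨hw, hwb⟩
    · rw [Finset.disjoint_left]
      rintro w hw1 hw2
      exact absurd (mem_filter.mp hw2).2.1 (not_lt.mpr (mem_filter.mp hw1).2.le)
  rw [h1, h3, h4, pow_add, pow_add, pow_succ]
  ring_nf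
  rw [pow_mul]
  norm_num
  exact neg_one_pow_eq_or _ _

lemma union_eq_insert_insert {σ τ : Finset V} {a b : V} (ha : σ \ τ = {a}) (hb : τ \ σ = {b}) :
    σ ∪ τ = insert a (insert b (σ ∩ τ)) := by
  have ha' : ∀ x, (x ∈ σ ∧ x ∉ τ) ↔ x = a := by
    intro x
    rw [← mem_sdiff, ha, mem_singleton]
  have hb' : ∀ x, (x ∈ τ ∧ x ∉ σ) ↔ x = b := by
    intro x
    rw [← mem_sdiff, hb, mem_singleton]
  ext x
  simp only [mem_union, mem_insert, mem_inter]
  constructor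
  · intro h
    by_cases h1 : x ∈ σ <;> by_cases h2 : x ∈ τ
    · exact Or.inr (Or.inr ⟨h1, h2⟩)
    · exact Or.inl ((ha' x).mp ⟨h1, h2⟩)
    · exact Or.inr (Or.inl ((hb' x).mp ⟨h2, h1⟩))
    · tauto
  · rintro (h | h | h)
    · exact Or.inl ((ha' x).mpr h).1
    · exact Or.inr ((hb' x).mpr h).1
    · exact Or.inl h.1

lemma sgn_mul_sgn {σ τ : Finset V} {a b : V} (ha : σ \ τ = {a}) (hb : τ \ σ = {b}) :
    sgn a (σ ∪ τ) * sgn b (σ ∪ τ) = - epsSign σ τ := by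
  have ham : a ∈ σ \ τ := ha ▸ mem_singleton_self a
  have hbm : b ∈ τ \ σ := hb ▸ mem_singleton_self b
  have hanc : a ∉ σ ∩ τ := fun h => (mem_sdiff.mp ham).2 (mem_inter.mp h).2
  have hbnc : b ∉ σ ∩ τ := fun h => (mem_sdiff.mp hbm).2 (mem_inter.mp h).1
  have hne : a ≠ b := fun h => (mem_sdiff.mp ham).2 (h ▸ (mem_sdiff.mp hbm).1)
  have hnon : (σ \ τ).Nonempty ∧ (τ \ σ).Nonempty := ⟨⟨a, ham⟩, ⟨b, hbm⟩⟩
  have hm1 : (σ \ τ).min' hnon.1 = a := le_antisymm (min'_le _ a ham)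
    (le_min' _ _ _ (fun y hy => by rw [ha, mem_singleton] at hy; exact hy ▸ le_rfl))
  have hm2 : (τ \ σ).min' hnon.2 = b := le_antisymm (min'_le _ b hbm)
    (le_min' _ _ _ (fun y hy => by rw [hb, mem_singleton] at hy; exact hy ▸ le_rfl))
  have heps : epsSign σ τ = (-1 : ℝ) ^ ((σ ∩ τ).filter fun w =>
      min a b < w ∧ w < max a b).card := by
    unfold epsSign
    rw [dif_pos hnon, hm1, hm2]
  rcases lt_or_gt_of_ne hne with hlt | hlt
  · rw [union_eq_insert_insert ha hb, sgn_mul_sgn_aux _ a b hlt hanc hbnc, heps,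
      min_eq_left hlt.le, max_eq_right hlt.le]
  · have hcomm : insert a (insert b (σ ∩ τ)) = insert b (insert a (σ ∩ τ)) := Finset.insert_comm a b _
    rw [union_eq_insert_insert ha hb, hcomm, mul_comm,
      sgn_mul_sgn_aux _ b a hlt hbnc hanc, heps,
      min_eq_right hlt.le, max_eq_left hlt.le]

/-- value of `bmat` on the union of two codim-`0` overlapping faces -/
lemma bmat_union_left (ω : V → ℝ) {σ τ : Finset V} {b : V} (hb : τ \ σ = {b})
    (hcard : σ.card + 1 = (σ ∪ τ).card) :
    bmat ω σ (σ ∪ τ) = sgn b (σ ∪ τ) * Real.sqrt (ω b) := by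
  unfold bmat
  rw [if_pos ⟨subset_union_left, hcard⟩, union_sdiff_left, hb, sum_singleton]

/-- The weighted sum identity over all of `V`. -/
lemma sum_split (X : AbstractSC V) (ω : V → ℝ) (σ : Finset V) :
    ∑ v, ω v = (∑ v ∈ X.link σ, ω v) + (∑ v ∈ σ, ω v)
      + ∑ v ∈ univ.filter (fun v => v ∉ σ ∧ insert v σ ∉ X.faces), ω v := by
  have h1 : ∑ v, ω v = (∑ v ∈ univ.filter (· ∈ σ), ω v)
      + ∑ v ∈ univ.filter (· ∉ σ), ω v := (sum_filter_add_sum_filter_not univ _ ω).symm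
  have h2 : ∑ v ∈ univ.filter (· ∉ σ), ω v
      = (∑ v ∈ (univ.filter (· ∉ σ)).filter (fun v => insert v σ ∈ X.faces), ω v)
      + ∑ v ∈ (univ.filter (· ∉ σ)).filter (fun v => insert v σ ∉ X.faces), ω v :=
    (sum_filter_add_sum_filter_not _ _ ω).symm
  have h3 : univ.filter (· ∈ σ) = σ := by ext v; simp
  have h4 : (univ.filter (· ∉ σ)).filter (fun v => insert v σ ∈ X.faces) = X.link σ := by
    rw [filter_filter]; rfl
  have h5 : (univ.filter (· ∉ σ)).filter (fun v => insert v σ ∉ X.faces)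
      = univ.filter (fun v => v ∉ σ ∧ insert v σ ∉ X.faces) := by
    rw [filter_filter]
  rw [h1, h2, h3, h4, h5]
  ring

/-- Diagonal entry computation. -/
lemma diag_sum (X : AbstractSC V) (ω : V → ℝ) (hω : ∀ v, 0 < ω v) (k : ℕ)
    {σ : Finset V} (hσc : σ.card = k + 1) :
    ∑ ρ ∈ univ.filter (fun ρ : Finset V => ρ.card = k + 2 ∧ ρ ∉ X.faces),
        bmat ω σ ρ * bmat ω σ ρ
      = ∑ v ∈ univ.filter (fun v => v ∉ σ ∧ insert v σ ∉ X.faces), ω v := by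
  rw [← Finset.sum_filter_of_ne (p := fun ρ => σ ⊆ ρ)
    (fun ρ _ h => by
      by_contra hns
      exact h (by rw [bmat_eq_zero_of_not_subset ω hns]; ring))]
  rw [filter_filter]
  symm
  apply Finset.sum_bij (i := fun v _ => insert v σ)
  · intro v hv
    simp only [mem_filter, mem_univ, true_and] at hv ⊢
    exact ⟨⟨by rw [card_insert_of_notMem hv.1, hσc], hv.2⟩, subset_insert v σ⟩
  · intro v hv w hw hvw
    simp only [mem_filter, mem_univ, true_and] at hv hw
    have : v ∈ insert w σ := hvw ▸ mem_insert_self v σ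
    rcases mem_insert.mp this with h | h
    · exact h
    · exact absurd h hv.1
  · intro ρ hρ
    simp only [mem_filter, mem_univ, true_and] at hρ
    obtain ⟨⟨hc, hnf⟩, hsub⟩ := hρ
    obtain ⟨v, hv1, _, hv3⟩ := sdiff_singleton_of_card hsub (by omega)
    exact ⟨v, by simp only [mem_filter, mem_univ, true_and]; exact ⟨hv1, hv3 ▸ hnf⟩, hv3.symm⟩
  · intro v hv
    simp only [mem_filter, mem_univ, true_and] at hv
    rw [bmat_insert ω hv.1]
    have h1 := sgn_mul_self v (insert v σ)
    have h2 := Real.mul_self_sqrt (hω v).le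
    calc ω v = (sgn v (insert v σ) * sgn v (insert v σ))
        * (Real.sqrt (ω v) * Real.sqrt (ω v)) := by rw [h1, h2]; ring
      _ = sgn v (insert v σ) * Real.sqrt (ω v) * (sgn v (insert v σ) * Real.sqrt (ω v)) := by
          ring

/-- Off-diagonal: single surviving term. -/
lemma offdiag_sum (X : AbstractSC V) (ω : V → ℝ) (k : ℕ)
    {σ τ : Finset V} (hσc : σ.card = k + 1) (hτc : τ.card = k + 1) (hne : σ ≠ τ) :
    ∑ ρ ∈ univ.filter (fun ρ : Finset V => ρ.card = k + 2 ∧ ρ ∉ X.faces),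
        bmat ω σ ρ * bmat ω τ ρ
      = if (σ ∩ τ).card + 1 = k + 1 ∧ σ ∪ τ ∉ X.faces
        then bmat ω σ (σ ∪ τ) * bmat ω τ (σ ∪ τ) else 0 := by
  have hcup : k + 2 ≤ (σ ∪ τ).card := by
    have h1 : σ ⊆ σ ∪ τ := subset_union_left
    have h2 : σ ≠ σ ∪ τ := by
      intro h
      have hts : τ ⊆ σ := h ▸ subset_union_right
      have : τ = σ := Finset.eq_of_subset_of_card_le hts (by omega)
      exact hne this.symm
    have := Finset.card_lt_card (Finset.ssubset_iff_subset_ne.mpr ⟨h1, h2⟩)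
    omega
  have hkey : ∀ ρ ∈ univ.filter (fun ρ : Finset V => ρ.card = k + 2 ∧ ρ ∉ X.faces),
      bmat ω σ ρ * bmat ω τ ρ ≠ 0 → ρ = σ ∪ τ ∧ (σ ∪ τ).card = k + 2 := by
    intro ρ hρ hne0
    simp only [mem_filter, mem_univ, true_and] at hρ
    have hsσ : σ ⊆ ρ := by
      by_contra h; exact hne0 (by rw [bmat_eq_zero_of_not_subset ω h]; ring)
    have hsτ : τ ⊆ ρ := by
      by_contra h; exact hne0 (by rw [bmat_eq_zero_of_not_subset ω h]; ring)
    have hsub : σ ∪ τ ⊆ ρ := union_subset hsσ hsτ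
    have hle := Finset.card_le_card hsub
    have heq : σ ∪ τ = ρ := Finset.eq_of_subset_of_card_le hsub (by omega)
    exact ⟨heq.symm, by rw [heq, hρ.1]⟩
  by_cases hcond : (σ ∩ τ).card + 1 = k + 1 ∧ σ ∪ τ ∉ X.faces
  · rw [if_pos hcond]
    have hcu : (σ ∪ τ).card = k + 2 := by
      have := Finset.card_union_add_card_inter σ τ
      omega
    apply Finset.sum_eq_single_of_mem
    · simp only [mem_filter, mem_univ, true_and]
      exact ⟨hcu, hcond.2⟩
    · intro ρ hρ hρne
      by_contra h
      exact hρne (hkey ρ hρ h).1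
  · rw [if_neg hcond]
    apply Finset.sum_eq_zero
    intro ρ hρ
    by_contra h
    obtain ⟨heq, hcu⟩ := hkey ρ hρ h
    simp only [mem_filter, mem_univ, true_and] at hρ
    have : (σ ∩ τ).card + 1 = k + 1 := by
      have := Finset.card_union_add_card_inter σ τ
      omega
    exact hcond ⟨this, heq ▸ hρ.2⟩


noncomputable def Mmat (X : AbstractSC V) (ω : V → ℝ) (k : ℕ) :
    Matrix (X.Face (k+1)) {ρ : Finset V // ρ.card = k+2 ∧ ρ ∉ X.faces} ℝ :=
  fun σ ρ => bmat ω σ.1 ρ.1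

noncomputable def dvec (X : AbstractSC V) (ω : V → ℝ) (k : ℕ) : X.Face (k+1) → ℝ :=
  fun σ => Real.sqrt (∏ v ∈ σ.1, ω v)

lemma dvec_pos (X : AbstractSC V) {ω : V → ℝ} (hω : ∀ v, 0 < ω v) (k : ℕ)
    (σ : X.Face (k+1)) : 0 < dvec X ω k σ :=
  Real.sqrt_pos.mpr (Finset.prod_pos (fun v _ => hω v))

lemma Hentry (X : AbstractSC V) (ω : V → ℝ) (k : ℕ) (σ τ : X.Face (k+1)) :
    (Mmat X ω k * (Mmat X ω k).conjTranspose) σ τ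
      = ∑ ρ ∈ univ.filter (fun ρ : Finset V => ρ.card = k + 2 ∧ ρ ∉ X.faces),
          bmat ω σ.1 ρ * bmat ω τ.1 ρ := by
  rw [Matrix.mul_apply]
  rw [Finset.sum_subtype (p := fun ρ : Finset V => ρ.card = k + 2 ∧ ρ ∉ X.faces)
    (univ.filter (fun ρ : Finset V => ρ.card = k + 2 ∧ ρ ∉ X.faces))
    (by intro x; simp) (fun ρ => bmat ω σ.1 ρ * bmat ω τ.1 ρ)]
  apply Finset.sum_congr rfl
  intro ρ _
  rw [Matrix.conjTranspose_apply]
  rfl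

lemma conj_identity (X : AbstractSC V) (ω : V → ℝ) (hω : ∀ v, 0 < ω v) (k : ℕ)
    (σ τ : X.Face (k+1)) :
    dvec X ω k σ * lapFull X ω (k+1) σ τ
      = ((∑ v, ω v) • (1 : Matrix (X.Face (k+1)) (X.Face (k+1)) ℝ)
          - Mmat X ω k * (Mmat X ω k).conjTranspose) σ τ * dvec X ω k τ := by
  rw [Matrix.sub_apply, Matrix.smul_apply, Matrix.one_apply, Hentry, smul_eq_mul]
  by_cases hst : σ = τ
  · subst hst
    rw [if_pos rfl, mul_one]
    unfold lapFull
    rw [if_pos rfl, diag_sum X ω hω k σ.2.2]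
    have hsplit := sum_split X ω σ.1
    have := dvec_pos X hω k σ
    nlinarith [hsplit]
  · have hne1 : σ.1 ≠ τ.1 := fun h => hst (Subtype.ext h)
    rw [if_neg hst, mul_zero]
    unfold lapFull
    rw [if_neg hst, offdiag_sum X ω k σ.2.2 τ.2.2 hne1]
    by_cases hcond : (σ.1 ∩ τ.1).card + 1 = k + 1 ∧ σ.1 ∪ τ.1 ∉ X.faces
    · rw [if_pos hcond, if_pos hcond]
      obtain ⟨hcap, hcup⟩ := hcond
      have hσc := σ.2.2
      have hτc := τ.2.2
      have hsd1 : (σ.1 \ τ.1).card = 1 := by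
        have := Finset.card_sdiff_add_card_inter σ.1 τ.1
        omega
      have hsd2 : (τ.1 \ σ.1).card = 1 := by
        have := Finset.card_sdiff_add_card_inter τ.1 σ.1
        rw [Finset.inter_comm] at this
        omega
      obtain ⟨a, ha⟩ := card_eq_one.mp hsd1
      obtain ⟨b, hb⟩ := card_eq_one.mp hsd2
      have hucard : (σ.1 ∪ τ.1).card = k + 2 := by
        have := Finset.card_union_add_card_inter σ.1 τ.1
        omega
      have h1 : bmat ω σ.1 (σ.1 ∪ τ.1) = sgn b (σ.1 ∪ τ.1) * Real.sqrt (ω b) :=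
        bmat_union_left ω hb (by omega)
      have h2 : bmat ω τ.1 (σ.1 ∪ τ.1) = sgn a (σ.1 ∪ τ.1) * Real.sqrt (ω a) := by
        rw [Finset.union_comm]
        exact bmat_union_left ω ha (by rw [Finset.union_comm]; omega)
      have hsgn : sgn a (σ.1 ∪ τ.1) * sgn b (σ.1 ∪ τ.1) = - epsSign σ.1 τ.1 :=
        sgn_mul_sgn ha hb
      -- products of weights
      set c := σ.1 ∩ τ.1 with hc
      have hPpos : (0:ℝ) < ∏ v ∈ c, ω v := Finset.prod_pos (fun v _ => hω v)
      have hσprod : ∏ v ∈ σ.1, ω v = ω a * ∏ v ∈ c, ω v := by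
        rw [← Finset.sdiff_union_inter σ.1 τ.1, Finset.prod_union (Finset.disjoint_sdiff_inter σ.1 τ.1),
          ha, Finset.prod_singleton]
      have hτprod : ∏ v ∈ τ.1, ω v = ω b * ∏ v ∈ c, ω v := by
        rw [← Finset.sdiff_union_inter τ.1 σ.1, Finset.prod_union (Finset.disjoint_sdiff_inter τ.1 σ.1),
          hb, Finset.prod_singleton, Finset.inter_comm]
      have hprodb : ∏ v ∈ τ.1 \ σ.1, ω v = ω b := by rw [hb, Finset.prod_singleton]
      rw [hprodb, h1, h2]
      unfold dvec
      rw [hσprod, hτprod]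
      have hwa := (hω a).le
      have hwb := (hω b).le
      have hP := hPpos.le
      rw [Real.sqrt_mul hwa, Real.sqrt_mul hwb]
      have : Real.sqrt (ω b) * Real.sqrt (ω b) = ω b := Real.mul_self_sqrt hwb
      calc Real.sqrt (ω a) * Real.sqrt (∏ v ∈ c, ω v) * (epsSign σ.1 τ.1 * ω b)
          = epsSign σ.1 τ.1 * (Real.sqrt (ω a) * Real.sqrt (∏ v ∈ c, ω v)
              * (Real.sqrt (ω b) * Real.sqrt (ω b))) := by rw [this]; ring
        _ = (0 - sgn b (σ.1 ∪ τ.1) * Real.sqrt (ω b) * (sgn a (σ.1 ∪ τ.1) * Real.sqrt (ω a)))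
            * (Real.sqrt (ω b) * Real.sqrt (∏ v ∈ c, ω v)) := by
            have : sgn b (σ.1 ∪ τ.1) * Real.sqrt (ω b) * (sgn a (σ.1 ∪ τ.1) * Real.sqrt (ω a))
                = - epsSign σ.1 τ.1 * (Real.sqrt (ω a) * Real.sqrt (ω b)) := by
              calc sgn b (σ.1 ∪ τ.1) * Real.sqrt (ω b) * (sgn a (σ.1 ∪ τ.1) * Real.sqrt (ω a))
                  = (sgn a (σ.1 ∪ τ.1) * sgn b (σ.1 ∪ τ.1))
                    * (Real.sqrt (ω a) * Real.sqrt (ω b)) := by ring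
                _ = - epsSign σ.1 τ.1 * (Real.sqrt (ω a) * Real.sqrt (ω b)) := by rw [hsgn]
            rw [this]
            ring
    · rw [if_neg hcond, if_neg hcond]
      ring


lemma claim_span (X : AbstractSC V) (ω : V → ℝ) (hω : ∀ v, 0 < ω v) (k : ℕ) (v₀ : V) :
    ∀ ρ : Finset V, ρ.card = k + 2 →
      (fun σ : X.Face (k+1) => bmat ω σ.1 ρ) ∈ Submodule.span ℝ
        (((univ.filter (fun ρ' : Finset V => ρ'.card = k+2 ∧ v₀ ∈ ρ')).image
          (fun ρ' => (fun σ : X.Face (k+1) => bmat ω σ.1 ρ')) : Finset (X.Face (k+1) → ℝ))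
          : Set (X.Face (k+1) → ℝ)) := by
  classical
  set colv : Finset V → (X.Face (k+1) → ℝ) := fun ρ => fun σ => bmat ω σ.1 ρ with hcolv
  set t₀ : Finset (Finset V) := univ.filter (fun ρ' : Finset V => ρ'.card = k+2 ∧ v₀ ∈ ρ')
    with ht₀
  intro ρ hρ
  show colv ρ ∈ Submodule.span ℝ ((t₀.image colv : Finset (X.Face (k+1) → ℝ))
    : Set (X.Face (k+1) → ℝ))
  by_cases hv : v₀ ∈ ρ
  · exact Submodule.subset_span
      (mem_image_of_mem colv (mem_filter.mpr ⟨mem_univ _, hρ, hv⟩))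
  · set τ := insert v₀ ρ with hτ
    have hτc : τ.card = k + 3 := by rw [hτ, card_insert_of_notMem hv, hρ]
    have hrel : ∑ u ∈ τ, (sgn u τ * Real.sqrt (ω u)) • colv (τ.erase u) = 0 := by
      funext σ
      rw [Finset.sum_apply, Pi.zero_apply]
      simp only [Pi.smul_apply, smul_eq_mul, hcolv]
      have hcc : σ.1.card + 2 = τ.card := by rw [hτc, σ.2.2]
      exact dd ω σ.1 τ hcc
    rw [hτ, Finset.sum_insert hv, Finset.erase_insert hv, ← hτ] at hrel
    set c₀ : ℝ := sgn v₀ τ * Real.sqrt (ω v₀) with hc₀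
    have hc₀ne : c₀ ≠ 0 := by
      apply mul_ne_zero
      · unfold sgn; exact pow_ne_zero _ (by norm_num)
      · exact (Real.sqrt_pos.mpr (hω v₀)).ne'
    set R : X.Face (k+1) → ℝ := ∑ u ∈ ρ, (sgn u τ * Real.sqrt (ω u)) • colv (τ.erase u)
      with hR
    have hxR : colv ρ = c₀⁻¹ • (-R) := by
      have h1 : c₀ • colv ρ = -R := eq_neg_of_add_eq_zero_left hrel
      rw [← h1, ← mul_smul, inv_mul_cancel₀ hc₀ne, one_smul]
    rw [hxR]
    apply Submodule.smul_mem
    apply Submodule.neg_mem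
    apply Submodule.sum_mem
    intro u hu
    apply Submodule.smul_mem
    apply Submodule.subset_span
    apply mem_image_of_mem
    rw [mem_filter]
    refine ⟨mem_univ _, ?_, ?_⟩
    · rw [card_erase_of_mem (by rw [hτ]; exact mem_insert_of_mem hu), hτc]
      omega
    · rw [mem_erase]
      exact ⟨fun h => hv (h ▸ hu), by rw [hτ]; exact mem_insert_self v₀ ρ⟩

lemma rank_Mmat_le (X : AbstractSC V) (ω : V → ℝ) (hω : ∀ v, 0 < ω v) (k : ℕ) (v₀ : V) :
    (Mmat X ω k).rank ≤ ((univ.erase v₀).powersetCard (k+1)).card := by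
  classical
  set colv : Finset V → (X.Face (k+1) → ℝ) := fun ρ => fun σ => bmat ω σ.1 ρ with hcolv
  set t₀ : Finset (Finset V) := univ.filter (fun ρ' : Finset V => ρ'.card = k+2 ∧ v₀ ∈ ρ')
    with ht₀
  set gens : Finset (X.Face (k+1) → ℝ) := t₀.image colv with hgens
  have hle1 : (Mmat X ω k).rank ≤ gens.card := by
    rw [Matrix.rank_eq_finrank_span_cols]
    calc Module.finrank ℝ (Submodule.span ℝ (Set.range (Mmat X ω k).transpose))
        ≤ Module.finrank ℝ (Submodule.span ℝ (gens : Set (X.Face (k+1) → ℝ))) := by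
          apply Submodule.finrank_mono
          rw [Submodule.span_le]
          rintro x ⟨ρ, rfl⟩
          exact claim_span X ω hω k v₀ ρ.1 ρ.2.1
      _ ≤ gens.card := finrank_span_finset_le_card gens
  calc (Mmat X ω k).rank ≤ gens.card := hle1
    _ ≤ t₀.card := card_image_le
    _ = ((univ.erase v₀).powersetCard (k+1)).card := by
        apply Finset.card_nbij' (i := fun ρ => ρ.erase v₀) (j := fun η => insert v₀ η)
        · intro ρ hρ
          obtain ⟨-, hc, hv⟩ := mem_filter.mp hρ
          beta_reduce; rw [Finset.mem_coe, mem_powersetCard]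
          constructor
          · intro x hx
            exact mem_erase.mpr ⟨(mem_erase.mp hx).1, mem_univ x⟩
          · rw [card_erase_of_mem hv, hc]
            omega
        · intro η hη
          obtain ⟨hsub, hc⟩ := mem_powersetCard.mp hη
          have hv0 : v₀ ∉ η := fun h => (mem_erase.mp (hsub h)).1 rfl
          exact mem_filter.mpr ⟨mem_univ _, by beta_reduce; rw [card_insert_of_notMem hv0, hc], mem_insert_self v₀ η⟩
        · intro ρ hρ
          exact insert_erase (mem_filter.mp hρ).2.2
        · intro η hη
          obtain ⟨hsub, -⟩ := mem_powersetCard.mp hη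
          exact erase_insert (fun h => (mem_erase.mp (hsub h)).1 rfl)

lemma face_card_nonempty (X : AbstractSC V) {m : ℕ} (hm : m ≤ X.faces.sup Finset.card) :
    ∃ σ, σ ∈ X.faces ∧ σ.card = m := by
  rcases Nat.eq_zero_or_pos m with h | h
  · exact ⟨∅, X.empty_mem, by rw [h, card_empty]⟩
  · have := (Finset.le_sup_iff h).mp hm
    obtain ⟨σ₀, hσ₀, hc⟩ := this
    obtain ⟨t, ht, htc⟩ := Finset.exists_subset_card_eq hc
    exact ⟨t, X.down_closed hσ₀ ht, htc⟩

lemma card_face_type (X : AbstractSC V) (s : ℕ) :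
    Fintype.card (X.Face s) = (X.facesOfCard s).card := by
  rw [Fintype.card_subtype]
  congr 1
  ext σ
  simp [AbstractSC.facesOfCard]

lemma card_filter_cards (X : AbstractSC V) (s n : ℕ) (hn : Fintype.card V = n) :
    (univ.filter (fun ρ : Finset V => ρ.card = s ∧ ρ ∉ X.faces)).card
      + (X.facesOfCard s).card = n.choose s := by
  have h1 : (univ.filter (fun ρ : Finset V => ρ.card = s)).card = n.choose s := by
    have : univ.filter (fun ρ : Finset V => ρ.card = s) = (univ : Finset V).powersetCard s := by
      rw [powersetCard_eq_filter, Finset.powerset_univ]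
    rw [this, card_powersetCard, card_univ, hn]
  have h2 : (X.facesOfCard s).card
      = ((univ.filter (fun ρ : Finset V => ρ.card = s)).filter (fun ρ => ρ ∈ X.faces)).card := by
    congr 1
    ext ρ
    simp only [AbstractSC.facesOfCard, mem_filter, mem_univ, true_and]
    tauto
  have h3 : (univ.filter (fun ρ : Finset V => ρ.card = s ∧ ρ ∉ X.faces))
      = (univ.filter (fun ρ : Finset V => ρ.card = s)).filter (fun ρ => ρ ∉ X.faces) := by
    rw [filter_filter]
  rw [h2, h3, add_comm, ← h1]
  exact Finset.card_filter_add_card_filter_not (fun ρ => ρ ∈ X.faces)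


lemma shadow_image {n : ℕ} (e : V ≃ Fin n) (F : Finset (Finset V)) :
    Finset.shadow (F.image (fun s => s.image e)) = (Finset.shadow F).image (fun s => s.image e) := by
  ext B
  rw [Finset.mem_shadow_iff, Finset.mem_image]
  constructor
  · rintro ⟨A', hA', a', ha', rfl⟩
    rw [Finset.mem_image] at hA'
    obtain ⟨A, hA, rfl⟩ := hA'
    rw [Finset.mem_image] at ha'
    obtain ⟨a, ha, rfl⟩ := ha'
    refine ⟨A.erase a, ?_, ?_⟩
    · rw [Finset.mem_shadow_iff]
      exact ⟨A, hA, a, ha, rfl⟩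
    · exact Finset.image_erase e.injective A a
  · rintro ⟨B', hB', rfl⟩
    rw [Finset.mem_shadow_iff] at hB'
    obtain ⟨A, hA, a, ha, rfl⟩ := hB'
    exact ⟨A.image e, Finset.mem_image_of_mem _ hA, e a, Finset.mem_image_of_mem _ ha,
      (Finset.image_erase e.injective A a).symm⟩

lemma kk_bound (X : AbstractSC V) (k n : ℕ) (hn : Fintype.card V = n)
    (h : (n-1).choose (k+2) < (X.facesOfCard (k+2)).card) :
    (n-1).choose (k+1) ≤ (X.facesOfCard (k+1)).card := by
  classical
  by_cases hcase : k + 2 ≤ n - 1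
  · set e : V ≃ Fin n := Fintype.equivFinOfCardEq hn with he
    set F := X.facesOfCard (k+2) with hF
    set 𝒜 : Finset (Finset (Fin n)) := F.image (fun s => s.image e) with h𝒜
    have hinj : Function.Injective (fun s : Finset V => s.image e) :=
      fun s t hst => by
        have := Finset.image_injective e.injective
        exact this hst
    have hsized : (𝒜 : Set (Finset (Fin n))).Sized (k+2) := by
      intro A hA
      rw [Finset.mem_coe, h𝒜, Finset.mem_image] at hA
      obtain ⟨s, hs, rfl⟩ := hA
      rw [Finset.card_image_of_injective _ e.injective]
      exact (Finset.mem_filter.mp hs).2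
    have hcard𝒜 : 𝒜.card = F.card := Finset.card_image_of_injective _ hinj
    have hkk := Finset.kruskal_katona_lovasz_form (i := 1) (r := k+2) (k := n-1) (n := n)
      (by omega) hcase (Nat.sub_le n 1) hsized (by rw [hcard𝒜]; exact h.le)
    rw [Function.iterate_one] at hkk
    have hsub : Finset.shadow 𝒜 ⊆ (X.facesOfCard (k+1)).image (fun s => s.image e) := by
      intro t ht
      rw [Finset.mem_shadow_iff] at ht
      obtain ⟨A', hA', a', ha', rfl⟩ := ht
      rw [h𝒜, Finset.mem_image] at hA'
      obtain ⟨A, hA, rfl⟩ := hA'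
      rw [Finset.mem_image] at ha'
      obtain ⟨a, ha, rfl⟩ := ha'
      rw [← Finset.image_erase e.injective A a]
      apply Finset.mem_image_of_mem
      rw [hF, AbstractSC.facesOfCard, Finset.mem_filter] at hA
      rw [AbstractSC.facesOfCard, Finset.mem_filter]
      exact ⟨X.down_closed hA.1 (Finset.erase_subset a A),
        by rw [Finset.card_erase_of_mem ha, hA.2]; omega⟩
    calc (n-1).choose (k+1) = (n-1).choose (k+2-1) := by norm_num
      _ ≤ (Finset.shadow 𝒜).card := by convert hkk using 3
      _ ≤ ((X.facesOfCard (k+1)).image (fun s => s.image e)).card := Finset.card_le_card hsub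
      _ ≤ (X.facesOfCard (k+1)).card := Finset.card_image_le
  · by_cases hn2 : n ≤ k + 1
    · exfalso
      have hempty : (X.facesOfCard (k+2)).card = 0 := by
        rw [Finset.card_eq_zero]
        rw [Finset.eq_empty_iff_forall_notMem]
        intro ρ hρ
        rw [AbstractSC.facesOfCard, Finset.mem_filter] at hρ
        have : ρ.card ≤ n := by rw [← hn, ← Finset.card_univ]; exact Finset.card_le_card (Finset.subset_univ ρ)
        omega
      omega
    · -- n = k + 2
      have hneq : n = k + 2 := by omega
      have hch0 : (n-1).choose (k+2) = 0 := Nat.choose_eq_zero_of_lt (by omega)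
      rw [hch0] at h
      obtain ⟨ρ, hρ⟩ := Finset.card_pos.mp h
      rw [AbstractSC.facesOfCard, Finset.mem_filter] at hρ
      have hρuniv : ρ = univ := Finset.eq_univ_of_card ρ (by rw [hρ.2, hn, hneq])
      have hall : (univ : Finset V).powersetCard (k+1) ⊆ X.facesOfCard (k+1) := by
        intro t ht
        rw [Finset.mem_powersetCard] at ht
        rw [AbstractSC.facesOfCard, Finset.mem_filter]
        exact ⟨X.down_closed (hρuniv ▸ hρ.1) (Finset.subset_univ t), ht.2⟩
      calc (n-1).choose (k+1) ≤ n.choose (k+1) := Nat.choose_le_choose (k+1) (Nat.sub_le n 1)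
        _ = ((univ : Finset V).powersetCard (k+1)).card := by rw [card_powersetCard, card_univ, hn]
        _ ≤ (X.facesOfCard (k+1)).card := Finset.card_le_card hall

section CharPoly
open Polynomial Matrix
variable {m : Type*} [Fintype m] [DecidableEq m]

lemma charpoly_conj (U B W : Matrix m m ℝ) (h1 : U * W = 1) (h2 : W * U = 1) :
    (U * B * W).charpoly = B.charpoly := by
  set f : Matrix m m ℝ →+* Matrix m m ℝ[X] := (C : ℝ →+* ℝ[X]).mapMatrix with hf
  have hUW : f U * f W = 1 := by rw [← f.map_mul, h1, f.map_one]
  have hUBW : f U * f B * f W = f (U * B * W) := by rw [← f.map_mul, ← f.map_mul]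
  have hcommU : f U * Matrix.scalar m (X : ℝ[X]) = Matrix.scalar m (X : ℝ[X]) * f U :=
    ((Matrix.scalar_commute (X : ℝ[X]) (fun r' => Commute.all _ _) (f U))).symm
  have key : f U * charmatrix B * f W = charmatrix (U * B * W) := by
    unfold charmatrix
    calc f U * (Matrix.scalar m (X : ℝ[X]) - f B) * f W
        = f U * Matrix.scalar m (X : ℝ[X]) * f W - f U * f B * f W := by
          rw [mul_sub, sub_mul]
      _ = Matrix.scalar m (X : ℝ[X]) - f (U * B * W) := by
          rw [hcommU, mul_assoc, hUW, mul_one, hUBW]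
  unfold Matrix.charpoly
  rw [← key, det_mul, det_mul]
  have hdet : (f U).det * (f W).det = 1 := by rw [← det_mul, hUW, det_one]
  calc (f U).det * (charmatrix B).det * (f W).det
      = (charmatrix B).det * ((f U).det * (f W).det) := by ring
    _ = (charmatrix B).det := by rw [hdet, mul_one]

lemma charpoly_diagonal (d : m → ℝ) :
    (diagonal d).charpoly = ∏ i, (X - C (d i)) := by
  have : charmatrix (diagonal d) = diagonal (fun i => (X : ℝ[X]) - C (d i)) := by
    refine Matrix.ext fun i j => ?_
    by_cases h : i = j
    · subst h; simp
    · simp [charmatrix_apply_ne _ _ _ h, diagonal_apply_ne _ h]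
  rw [Matrix.charpoly, this, det_diagonal]

lemma spec_smul_one_sub (S : ℝ) (Hm : Matrix m m ℝ) (hH : Hm.IsHermitian) :
    (S • (1 : Matrix m m ℝ) - Hm).charpoly
      = ∏ i, (X - C (S - hH.eigenvalues i)) := by
  set U : Matrix m m ℝ := (hH.eigenvectorUnitary : Matrix m m ℝ) with hU
  have h1 : U * star U = 1 := (Matrix.mem_unitaryGroup_iff).mp hH.eigenvectorUnitary.2
  have h2 : star U * U = 1 := (Matrix.mem_unitaryGroup_iff').mp hH.eigenvectorUnitary.2
  have hspec : Hm = U * diagonal (RCLike.ofReal ∘ hH.eigenvalues) * star U :=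
    hH.spectral_theorem
  have hdg : diagonal ((RCLike.ofReal : ℝ → ℝ) ∘ hH.eigenvalues) = diagonal hH.eigenvalues := by
    congr 1
  have hspec' : Hm = U * diagonal hH.eigenvalues * star U := by rw [← hdg]; exact hspec
  have hkey : S • (1 : Matrix m m ℝ) - Hm
      = U * (diagonal (fun i => S - hH.eigenvalues i)) * star U := by
    have hone : U * (S • (1 : Matrix m m ℝ)) * star U = S • (1 : Matrix m m ℝ) := by
      rw [Matrix.mul_smul, Matrix.smul_mul, mul_one, h1]
    calc S • (1 : Matrix m m ℝ) - Hm
        = U * (S • (1 : Matrix m m ℝ)) * star U - U * diagonal hH.eigenvalues * star U := by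
          rw [hone, ← hspec']
      _ = U * (S • (1 : Matrix m m ℝ) - diagonal hH.eigenvalues) * star U := by
          rw [Matrix.mul_sub, Matrix.sub_mul]
      _ = U * (diagonal fun i => S - hH.eigenvalues i) * star U := by
          rw [Matrix.smul_one_eq_diagonal, diagonal_sub]
  rw [hkey, charpoly_conj _ _ _ h1 h2, charpoly_diagonal]

lemma charpoly_eq_of_diag_conj (d : m → ℝ) (hd : ∀ i, d i ≠ 0) (L P : Matrix m m ℝ)
    (h : ∀ i j, d i * L i j = P i j * d j) : L.charpoly = P.charpoly := by
  have hL : L = diagonal (fun i => (d i)⁻¹) * P * diagonal d := by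
    refine Matrix.ext fun i j => ?_
    rw [Matrix.mul_diagonal, Matrix.diagonal_mul, mul_assoc, ← h i j, ← mul_assoc,
      inv_mul_cancel₀ (hd i), one_mul]
  rw [hL]
  apply charpoly_conj
  · rw [diagonal_mul_diagonal]
    refine Matrix.ext fun i j => ?_
    by_cases hx : i = j
    · subst hx; rw [diagonal_apply_eq, one_apply_eq, inv_mul_cancel₀ (hd i)]
    · rw [diagonal_apply_ne _ hx, one_apply_ne hx]
  · rw [diagonal_mul_diagonal]
    refine Matrix.ext fun i j => ?_
    by_cases hx : i = j
    · subst hx; rw [diagonal_apply_eq, one_apply_eq, mul_inv_cancel₀ (hd i)]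
    · rw [diagonal_apply_ne _ hx, one_apply_ne hx]

lemma spec_main {n' : Type*} [Fintype n'] (S : ℝ) (L : Matrix m m ℝ) (Mm : Matrix m n' ℝ)
    (d : m → ℝ) (hd : ∀ i, d i ≠ 0)
    (hconj : ∀ i j, d i * L i j = (S • (1 : Matrix m m ℝ) - Mm * Mm.conjTranspose) i j * d j) :
    (∀ x ∈ spec L, x ≤ S) ∧ Multiset.card (spec L) = Fintype.card m ∧
      (spec L).count S + Mm.rank = Fintype.card m := by
  set H := Mm * Mm.conjTranspose with hHdef
  have hH : H.IsHermitian := isHermitian_mul_conjTranspose_self Mm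
  have hPSD : H.PosSemidef := posSemidef_self_mul_conjTranspose Mm
  have hchar : L.charpoly = ∏ i, (X - C (S - hH.eigenvalues i)) := by
    rw [charpoly_eq_of_diag_conj d hd L _ hconj, spec_smul_one_sub S H hH]
  have hprod : (∏ i, (X - C (S - hH.eigenvalues i)))
      = (Multiset.map (fun a => X - C a)
          (Multiset.map (fun i => S - hH.eigenvalues i) Finset.univ.val)).prod := by
    rw [Multiset.map_map]
    rfl
  have hspec : spec L = Multiset.map (fun i => S - hH.eigenvalues i) Finset.univ.val := by
    rw [spec, hchar, hprod, roots_multiset_prod_X_sub_C]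
  have heig : ∀ i, 0 ≤ hH.eigenvalues i := fun i => hPSD.eigenvalues_nonneg i
  refine ⟨?_, ?_, ?_⟩
  · intro x hx
    rw [hspec, Multiset.mem_map] at hx
    obtain ⟨i, _, rfl⟩ := hx
    linarith [heig i]
  · rw [hspec, Multiset.card_map]
    rfl
  · rw [hspec, Multiset.count_map]
    have hfilter : Multiset.filter (fun i => S = S - hH.eigenvalues i) Finset.univ.val
        = Multiset.filter (fun i => hH.eigenvalues i = 0) Finset.univ.val := by
      apply Multiset.filter_congr
      intro i _
      constructor
      · intro h; linarith
      · intro h; rw [h]; ring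
    rw [hfilter]
    have hrank : Mm.rank = Fintype.card {i // hH.eigenvalues i ≠ 0} := by
      rw [← Matrix.rank_self_mul_conjTranspose Mm]
      exact hH.rank_eq_card_non_zero_eigs
    have hcard0 : Multiset.card (Multiset.filter (fun i => hH.eigenvalues i = 0) Finset.univ.val)
        = Fintype.card {i // hH.eigenvalues i = 0} := by
      rw [Fintype.card_subtype]
      rfl
    rw [hcard0, hrank]
    rw [Fintype.card_subtype, Fintype.card_subtype, ← Finset.card_union_of_disjoint]
    · rw [Finset.filter_union_filter_not_eq (p := fun i => hH.eigenvalues i = 0) (s := Finset.univ)]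
      rfl
    · exact Finset.disjoint_filter_filter_not _ _ _

end CharPoly
end S3

open S3 in
/-- The largest eigenvalue of `L_k^ω(X)` is at most `Σ_{v∈V} ω(v)`;
moreover if `f_k(X) > C(n-1,k+1)` or `f_{k+1}(X) > C(n-1,k+2)` then `Σ_{v∈V} ω(v)` is an
eigenvalue with multiplicity at least
`max{f_k+f_{k+1}-C(n,k+2), f_k-C(n-1,k+1), f_{k+1}-C(n-1,k+2)}`. -/
theorem statement3 {V : Type*} [Fintype V] [LinearOrder V]
    (X : AbstractSC V) (ω : V → ℝ) (hω : ∀ v, 0 < ω v)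
    (n : ℕ) (hn : Fintype.card V = n)
    (hvert : ∀ v : V, ({v} : Finset V) ∈ X.faces)
    (k : ℕ) (hk : (k : ℤ) ≤ X.dimension) :
    eigDesc (lapFull X ω (k + 1)) 1 ≤ ∑ v, ω v ∧
    (((n - 1).choose (k + 1) < (X.facesOfCard (k + 1)).card ∨
        (n - 1).choose (k + 2) < (X.facesOfCard (k + 2)).card) →
      max (((X.facesOfCard (k + 1)).card : ℤ) + (X.facesOfCard (k + 2)).card -
            n.choose (k + 2))
        (max (((X.facesOfCard (k + 1)).card : ℤ) - (n - 1).choose (k + 1))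
          (((X.facesOfCard (k + 2)).card : ℤ) - (n - 1).choose (k + 2))) ≤
        ((spec (lapFull X ω (k + 1))).count (∑ v, ω v) : ℤ)) := by
  classical
  -- a face of cardinality k+1 exists
  have hsup : k + 1 ≤ X.faces.sup Finset.card := by
    unfold AbstractSC.dimension at hk
    omega
  obtain ⟨σ₀, hσ₀f, hσ₀c⟩ := face_card_nonempty X hsup
  have hv₀ : σ₀.Nonempty := Finset.card_pos.mp (by omega)
  obtain ⟨v₀, -⟩ := hv₀
  have hn1 : 1 ≤ n := by
    rw [← hn]
    exact Fintype.card_pos_iff.mpr ⟨v₀⟩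
  have hd : ∀ σ : X.Face (k+1), dvec X ω k σ ≠ 0 := fun σ => (dvec_pos X hω k σ).ne'
  obtain ⟨hle, hcard, hcount⟩ := spec_main (∑ v, ω v) (lapFull X ω (k+1)) (Mmat X ω k)
    (dvec X ω k) hd (fun σ τ => conj_identity X ω hω k σ τ)
  have hfc1 : Fintype.card (X.Face (k+1)) = (X.facesOfCard (k+1)).card := card_face_type X (k+1)
  constructor
  · -- part 1 : largest eigenvalue bound
    unfold eigDesc
    have hlen : ((spec (lapFull X ω (k+1))).sort (· ≤ ·)).length
        = Multiset.card (spec (lapFull X ω (k+1))) := Multiset.length_sort _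
    have hpos : 0 < Multiset.card (spec (lapFull X ω (k+1))) := by
      rw [hcard, hfc1]
      exact Finset.card_pos.mpr ⟨σ₀, by
        rw [AbstractSC.facesOfCard, Finset.mem_filter]; exact ⟨hσ₀f, hσ₀c⟩⟩
    have hidx : Multiset.card (spec (lapFull X ω (k+1))) - 1
        < ((spec (lapFull X ω (k+1))).sort (· ≤ ·)).length := by omega
    rw [List.getD_eq_getElem _ 0 hidx]
    have hmem := List.getElem_mem hidx
    rw [Multiset.mem_sort] at hmem
    exact hle _ hmem
  · -- part 2 : multiplicity bound
    intro _hyp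
    have hNT : Fintype.card {ρ : Finset V // ρ.card = k+2 ∧ ρ ∉ X.faces}
        = (univ.filter (fun ρ : Finset V => ρ.card = k+2 ∧ ρ ∉ X.faces)).card :=
      Fintype.card_subtype _
    have hr1 : (Mmat X ω k).rank
        ≤ (univ.filter (fun ρ : Finset V => ρ.card = k+2 ∧ ρ ∉ X.faces)).card := by
      have := Matrix.rank_le_card_width (Mmat X ω k)
      rwa [hNT] at this
    have hr2 : (Mmat X ω k).rank ≤ (n-1).choose (k+1) := by
      have h0 := rank_Mmat_le X ω hω k v₀
      rwa [card_powersetCard, Finset.card_erase_of_mem (mem_univ v₀), card_univ, hn] at h0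
    have hcc := card_filter_cards X (k+2) n hn
    have hrank_le : (Mmat X ω k).rank ≤ Fintype.card (X.Face (k+1)) := by omega
    have hpascal : n.choose (k+2) = (n-1).choose (k+1) + (n-1).choose (k+2) := by
      have h' : n - 1 + 1 = n := by omega
      rw [← h']
      exact Nat.choose_succ_succ (n-1) (k+1)
    rw [hfc1] at hcount
    apply max_le
    · omega
    · apply max_le
      · omega
      · rcases le_or_gt (X.facesOfCard (k+2)).card ((n-1).choose (k+2)) with hcb | hcb
        · omega
        · have hkka := kk_bound X k n hn hcb
          omega
end

section
/- Let H be an n-dimensional real inner product space, let A : H → H be a self-adjoint linear operator, let K ⊆ H be a subspace of dimension m, and let A_K be the compression of A to K (the composition of A restricted to K with the orthogonal projection of H onto K). Then for every 1 ≤ i ≤ m, λ_{n−m+i}^↓(A) ≤ λ_i^↓(A_K) ≤ λ_i^↓(A); equivalently, λ_i^↑(A) ≤ λ_i^↑(A_K) ≤ λ_{n−m+i}^↑(A). -/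
/-- The multiset of eigenvalues (with multiplicity) of an endomorphism of a
finite-dimensional real vector space: the roots of its characteristic polynomial. -/
noncomputable def lspec {H : Type*} [NormedAddCommGroup H] [InnerProductSpace ℝ H]
    [FiniteDimensional ℝ H] (A : H →ₗ[ℝ] H) : Multiset ℝ :=
  (LinearMap.charpoly A).roots

/-- The `i`-th smallest eigenvalue (1-indexed, with multiplicity). -/
noncomputable def lEigAsc {H : Type*} [NormedAddCommGroup H] [InnerProductSpace ℝ H]
    [FiniteDimensional ℝ H] (A : H →ₗ[ℝ] H) (i : ℕ) : ℝ :=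
  ((lspec A).sort (· ≤ ·)).getD (i - 1) 0

/-- The `i`-th largest eigenvalue (1-indexed, with multiplicity). -/
noncomputable def lEigDesc {H : Type*} [NormedAddCommGroup H] [InnerProductSpace ℝ H]
    [FiniteDimensional ℝ H] (A : H →ₗ[ℝ] H) (i : ℕ) : ℝ :=
  ((lspec A).sort (· ≤ ·)).getD ((lspec A).card - i) 0

/-- The compression of an operator `A : H → H` to a subspace `K`: the composition
`P ∘ A ∘ ι : K → K` of `A` restricted to `K` with the orthogonal projection `P : H → K`. -/
noncomputable def compress {H : Type*} [NormedAddCommGroup H] [InnerProductSpace ℝ H]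
    [FiniteDimensional ℝ H] (A : H →ₗ[ℝ] H) (K : Submodule ℝ H) : K →ₗ[ℝ] K :=
  (K.orthogonalProjectionOnto).toLinearMap ∘ₗ A ∘ₗ K.subtype

open Module Polynomial RealInnerProductSpace

section Helpers

variable {E : Type*} [NormedAddCommGroup E] [InnerProductSpace ℝ E] [FiniteDimensional ℝ E]

theorem aux_charpoly_of_eigenbasis {B : E →ₗ[ℝ] E} {d : ℕ}
    (e : OrthonormalBasis (Fin d) ℝ E) (μ : Fin d → ℝ)
    (h : ∀ j, B (e j) = μ j • e j) :
    LinearMap.charpoly B = ∏ j, (X - C (μ j)) := by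
  have hm : LinearMap.toMatrix e.toBasis e.toBasis B = Matrix.diagonal μ := by
    apply Matrix.ext; intro i j
    rw [LinearMap.toMatrix_apply, Matrix.diagonal_apply]
    rw [OrthonormalBasis.coe_toBasis, h j, ← OrthonormalBasis.coe_toBasis e, map_smul,
      Basis.repr_self]
    simp only [Finsupp.smul_single, smul_eq_mul, mul_one, Finsupp.single_apply]
    by_cases hij : i = j <;> simp [hij, eq_comm]
  have hc : Matrix.charmatrix (Matrix.diagonal μ) =
      Matrix.diagonal (fun j => (X : ℝ[X]) - C (μ j)) := by
    apply Matrix.ext; intro i j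
    by_cases hij : i = j
    · subst hij; simp [Matrix.charmatrix_apply_eq]
    · rw [Matrix.charmatrix_apply_ne _ _ _ hij, Matrix.diagonal_apply_ne _ hij,
        Matrix.diagonal_apply_ne _ hij, map_zero, neg_zero]
  rw [← LinearMap.charpoly_toMatrix B e.toBasis, hm, Matrix.charpoly, hc, Matrix.det_diagonal]

theorem aux_lspec_eq_ofFn {B : E →ₗ[ℝ] E} {d : ℕ}
    (e : OrthonormalBasis (Fin d) ℝ E) (μ : Fin d → ℝ)
    (h : ∀ j, B (e j) = μ j • e j) :
    lspec B = ↑(List.ofFn μ) := by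
  rw [lspec, aux_charpoly_of_eigenbasis e μ h]
  have key : (∏ j, (X - C (μ j)) : ℝ[X]) =
      (Multiset.map (fun a => X - C a) ↑(List.ofFn μ)).prod := by
    rw [Multiset.map_coe, Multiset.prod_coe, List.map_ofFn, ← List.prod_ofFn]
    rfl
  rw [key, Polynomial.roots_multiset_prod_X_sub_C]

theorem aux_sort_lspec {B : E →ₗ[ℝ] E} {d : ℕ}
    (e : OrthonormalBasis (Fin d) ℝ E) (μ : Fin d → ℝ) (hmono : Monotone μ)
    (h : ∀ j, B (e j) = μ j • e j) :
    (lspec B).sort (· ≤ ·) = List.ofFn μ := by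
  refine List.Perm.eq_of_pairwise' (Multiset.pairwise_sort _ _)
    (List.pairwise_ofFn.mpr fun _ _ hij => hmono hij.le) ?_
  rw [← Multiset.coe_eq_coe, Multiset.sort_eq, aux_lspec_eq_ofFn e μ h]

theorem aux_inner_map_eq_sum {B : E →ₗ[ℝ] E} {d : ℕ}
    (e : OrthonormalBasis (Fin d) ℝ E) (μ : Fin d → ℝ)
    (h : ∀ j, B (e j) = μ j • e j) (x : E) :
    ⟪x, B x⟫ = ∑ j, μ j * (e.repr x j) ^ 2 := by
  have hx : B x = ∑ j, (e.repr x j * μ j) • e j := by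
    conv_lhs => rw [← e.sum_repr x]
    rw [map_sum]
    refine Finset.sum_congr rfl fun j _ => ?_
    rw [map_smul, h j, smul_smul]
  rw [hx, inner_sum]
  refine Finset.sum_congr rfl fun j _ => ?_
  rw [real_inner_smul_right, real_inner_comm, ← e.repr_apply_apply]
  ring

theorem aux_inner_self_eq_sum {d : ℕ} (e : OrthonormalBasis (Fin d) ℝ E) (x : E) :
    ⟪x, x⟫ = ∑ j, (e.repr x j) ^ 2 := by
  have := aux_inner_map_eq_sum e (fun _ => (1 : ℝ)) (B := LinearMap.id)
    (fun j => by simp) x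
  simpa using this

theorem aux_repr_eq_zero {d : ℕ} (e : OrthonormalBasis (Fin d) ℝ E) {S : Set (Fin d)} {x : E}
    (hx : x ∈ Submodule.span ℝ (e '' S)) {j : Fin d} (hj : j ∉ S) :
    e.repr x j = 0 := by
  rw [e.repr_apply_apply]
  have hle : Submodule.span ℝ (e '' S) ≤ LinearMap.ker (innerSL ℝ (e j)).toLinearMap := by
    rw [Submodule.span_le]
    rintro y ⟨i, hi, rfl⟩
    have hij : j ≠ i := fun hji => hj (hji ▸ hi)
    simpa [LinearMap.mem_ker] using e.orthonormal.2 hij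
  simpa [LinearMap.mem_ker] using hle hx

theorem aux_exists_ne_zero_mem_inf {V W : Submodule ℝ E}
    (h : finrank ℝ E < finrank ℝ V + finrank ℝ W) :
    ∃ x : E, x ≠ 0 ∧ x ∈ V ∧ x ∈ W := by
  have hsum := Submodule.finrank_sup_add_finrank_inf_eq V W
  have hle : finrank ℝ ↥(V ⊔ W) ≤ finrank ℝ E := Submodule.finrank_le _
  have hpos : 0 < finrank ℝ ↥(V ⊓ W) := by omega
  have hne : V ⊓ W ≠ ⊥ := by
    intro hbot
    rw [hbot, finrank_bot] at hpos
    omega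
  obtain ⟨x, hx, hx0⟩ := Submodule.exists_mem_ne_zero_of_ne_bot hne
  exact ⟨x, hx0, hx.1, hx.2⟩

theorem aux_rayleigh_pair {B : E →ₗ[ℝ] E} (hB : B.IsSymmetric) {d : ℕ}
    (hd : finrank ℝ E = d) {i : ℕ} (hi1 : 1 ≤ i) (hi2 : i ≤ d) :
    (∃ V : Submodule ℝ E, finrank ℝ V = i ∧
        ∀ x ∈ V, lEigDesc B i * ⟪x, x⟫ ≤ ⟪x, B x⟫) ∧
    (∃ W : Submodule ℝ E, finrank ℝ W = d - i + 1 ∧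
        ∀ x ∈ W, ⟪x, B x⟫ ≤ lEigDesc B i * ⟪x, x⟫) := by
  classical
  set e0 := hB.eigenvectorBasis hd with he0
  set μ0 := hB.eigenvalues hd with hμ0
  have h0 : ∀ j, B (e0 j) = μ0 j • e0 j := fun j => by
    exact_mod_cast hB.apply_eigenvectorBasis hd j
  set σ := Tuple.sort μ0 with hσ
  set e : OrthonormalBasis (Fin d) ℝ E := e0.reindex σ.symm with he
  set μ : Fin d → ℝ := μ0 ∘ σ with hμ
  have hmono : Monotone μ := Tuple.monotone_sort μ0
  have h : ∀ j, B (e j) = μ j • e j := by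
    intro j
    rw [he, OrthonormalBasis.reindex_apply, Equiv.symm_symm]
    exact h0 (σ j)
  have hsort : (lspec B).sort (· ≤ ·) = List.ofFn μ := aux_sort_lspec e μ hmono h
  have hlen : (lspec B).card = d := by
    rw [← Multiset.length_sort (· ≤ ·), hsort, List.length_ofFn]
  have hki : d - i < d := by omega
  set k : Fin d := ⟨d - i, hki⟩ with hk
  have hval : lEigDesc B i = μ k := by
    rw [lEigDesc, hsort, hlen, List.getD_eq_getElem _ _ (by rw [List.length_ofFn]; exact hki)]
    simp [hk]
  have hBx := aux_inner_map_eq_sum e μ h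
  have hxx := aux_inner_self_eq_sum e
  constructor
  · refine ⟨Submodule.span ℝ (e '' Set.Ici k), ?_, ?_⟩
    · rw [Set.image_eq_range]
      erw [finrank_span_eq_card ((e.orthonormal.comp _ Subtype.val_injective).linearIndependent)]
      have hkv : (k : ℕ) = d - i := rfl
      rw [Fintype.card_Ici, Fin.card_Ici, hkv]
      omega
    · intro x hx
      rw [hBx, hxx, hval, Finset.mul_sum]
      refine Finset.sum_le_sum fun j _ => ?_
      by_cases hj : k ≤ j
      · exact mul_le_mul_of_nonneg_right (hmono hj) (sq_nonneg _)
      · rw [aux_repr_eq_zero e hx (by simpa using hj)]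
        simp
  · refine ⟨Submodule.span ℝ (e '' Set.Iic k), ?_, ?_⟩
    · rw [Set.image_eq_range]
      erw [finrank_span_eq_card ((e.orthonormal.comp _ Subtype.val_injective).linearIndependent)]
      have hkv : (k : ℕ) = d - i := rfl
      rw [Fintype.card_Iic, Fin.card_Iic, hkv]
    · intro x hx
      rw [hBx, hxx, hval, Finset.mul_sum]
      refine Finset.sum_le_sum fun j _ => ?_
      by_cases hj : j ≤ k
      · exact mul_le_mul_of_nonneg_right (hmono hj) (sq_nonneg _)
      · rw [aux_repr_eq_zero e hx (by simpa using hj)]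
        simp

end Helpers

/-- Cauchy interlacing for compressions: for a self-adjoint operator `A` on
an `n`-dimensional real inner product space and the compression `A_K` to an `m`-dimensional
subspace `K`, `λ_{n-m+i}^↓(A) ≤ λ_i^↓(A_K) ≤ λ_i^↓(A)` for all `1 ≤ i ≤ m`. -/
theorem statement18 {H : Type*} [NormedAddCommGroup H] [InnerProductSpace ℝ H]
    [FiniteDimensional ℝ H] (n : ℕ) (hn : Module.finrank ℝ H = n)
    (A : H →ₗ[ℝ] H) (hA : A.IsSymmetric)
    (K : Submodule ℝ H) (m : ℕ) (hm : Module.finrank ℝ K = m)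
    (i : ℕ) (hi1 : 1 ≤ i) (hi2 : i ≤ m) :
    lEigDesc A (n - m + i) ≤ lEigDesc (compress A K) i ∧
      lEigDesc (compress A K) i ≤ lEigDesc A i := by
  have hmn : m ≤ n := by
    rw [← hn, ← hm]; exact K.finrank_le
  have hAK : (compress A K).IsSymmetric := by
    intro x y
    simp only [compress, LinearMap.coe_comp, Function.comp_apply,
      ContinuousLinearMap.coe_coe, Submodule.subtype_apply]
    rw [Submodule.inner_orthogonalProjectionOnto_eq_of_mem_right, Submodule.inner_orthogonalProjectionOnto_eq_of_mem_left]
    exact hA ↑x ↑y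
  have hcomp : ∀ y : K, ⟪y, compress A K y⟫ = ⟪(y : H), A ↑y⟫ := by
    intro y
    simp only [compress, LinearMap.coe_comp, Function.comp_apply,
      ContinuousLinearMap.coe_coe, Submodule.subtype_apply]
    rw [Submodule.inner_orthogonalProjectionOnto_eq_of_mem_left]
  obtain ⟨⟨V', hV'rank, hV'⟩, ⟨W', hW'rank, hW'⟩⟩ := aux_rayleigh_pair hAK hm hi1 hi2
  obtain ⟨⟨V, hVrank, hV⟩, -⟩ := aux_rayleigh_pair hA hn
    (show 1 ≤ n - m + i by omega) (show n - m + i ≤ n by omega)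
  obtain ⟨-, ⟨W, hWrank, hW⟩⟩ := aux_rayleigh_pair hA hn hi1 (le_trans hi2 hmn)
  constructor
  · -- lower bound
    obtain ⟨x, hx0, hxV, hxW⟩ : ∃ x : H, x ≠ 0 ∧ x ∈ V ∧ x ∈ W'.map K.subtype := by
      refine aux_exists_ne_zero_mem_inf ?_
      rw [hVrank, Submodule.finrank_map_subtype_eq, hW'rank, hn]
      omega
    obtain ⟨y, hyW', hyx⟩ := Submodule.mem_map.mp hxW
    have hpos : (0 : ℝ) < ⟪x, x⟫ :=
      not_le.mp fun hle => hx0 (real_inner_self_nonpos.mp hle)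
    have hyx' : (y : H) = x := hyx
    have hyy : ⟪y, y⟫ = ⟪x, x⟫ := by rw [← hyx']; rfl
    have chain : lEigDesc A (n - m + i) * ⟪x, x⟫ ≤ lEigDesc (compress A K) i * ⟪x, x⟫ := by
      calc lEigDesc A (n - m + i) * ⟪x, x⟫ ≤ ⟪x, A x⟫ := hV x hxV
        _ = ⟪y, compress A K y⟫ := by rw [hcomp y, hyx']
        _ ≤ lEigDesc (compress A K) i * ⟪y, y⟫ := hW' y hyW'
        _ = lEigDesc (compress A K) i * ⟪x, x⟫ := by rw [hyy]
    exact le_of_mul_le_mul_right (by linarith [chain]) hpos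
  · -- upper bound
    obtain ⟨x, hx0, hxV, hxW⟩ : ∃ x : H, x ≠ 0 ∧ x ∈ V'.map K.subtype ∧ x ∈ W := by
      refine aux_exists_ne_zero_mem_inf ?_
      rw [hWrank, Submodule.finrank_map_subtype_eq, hV'rank, hn]
      omega
    obtain ⟨y, hyV', hyx⟩ := Submodule.mem_map.mp hxV
    have hpos : (0 : ℝ) < ⟪x, x⟫ :=
      not_le.mp fun hle => hx0 (real_inner_self_nonpos.mp hle)
    have hyx' : (y : H) = x := hyx
    have hyy : ⟪y, y⟫ = ⟪x, x⟫ := by rw [← hyx']; rfl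
    have chain : lEigDesc (compress A K) i * ⟪x, x⟫ ≤ lEigDesc A i * ⟪x, x⟫ := by
      calc lEigDesc (compress A K) i * ⟪x, x⟫
          = lEigDesc (compress A K) i * ⟪y, y⟫ := by rw [hyy]
        _ ≤ ⟪y, compress A K y⟫ := hV' y hyV'
        _ = ⟪x, A x⟫ := by rw [hcomp y, hyx']
        _ ≤ lEigDesc A i * ⟪x, x⟫ := hW x hxW
    exact le_of_mul_le_mul_right (by linarith [chain]) hpos
end
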